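/- arXiv:2211.09571 — 6 statements merged into one kernel-verified Lean document; each statement's English description precedes it below -/
import Mathlib

section
/- There exists an anonymous hedonic game with exactly 7 agents, in which every agent's preferences over coalition sizes are strict and generally single-peaked, that admits an infinite sequence of IS deviations starting from the singleton partition, and also admits an infinite sequence of IS deviations starting from the grand coalition. -/
/-- A partition of the agent set `A`, encoded by the map sending each agent to
the coalition containing it. -/
def IsPartition {A : Type*} [DecidableEq A] (π : A → Finset A) : Prop :=
  (∀ i, i ∈ π i) ∧ ∀ i j, i ∈ π j → π i = π j

/-- Strict part of a weak preference relation `r`. -/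
def StrictPref {α : Type*} (r : α → α → Prop) (x y : α) : Prop :=
  r x y ∧ ¬ r y x

/-- `π'` is obtained from `π` by an IS deviation of agent `i`, where
`wp j C D` means that agent `j` weakly prefers coalition `C` to coalition `D`. -/
def IsISDeviation {A : Type*} [DecidableEq A]
    (wp : A → Finset A → Finset A → Prop) (π π' : A → Finset A) (i : A) : Prop :=
  π' i ≠ π i ∧
  (∀ j, j ≠ i → (π' j).erase i = (π j).erase i) ∧
  StrictPref (wp i) (π' i) (π i) ∧
  ∀ j ∈ (π' i).erase i, wp j (π' j) (π j)

/-- One step of the dynamics of IS deviations between partitions. -/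
def ISStep {A : Type*} [DecidableEq A]
    (wp : A → Finset A → Finset A → Prop) (π π' : A → Finset A) : Prop :=
  IsPartition π ∧ IsPartition π' ∧ ∃ i, IsISDeviation wp π π' i

/-- A partition is individually stable if no IS deviation from it is possible. -/
def IndividuallyStable {A : Type*} [DecidableEq A]
    (wp : A → Finset A → Finset A → Prop) (π : A → Finset A) : Prop :=
  IsPartition π ∧ ∀ π' : A → Finset A, ¬ ISStep wp π π'

/-- `r` is a weak order (total preorder) on the set `S`. -/
def WeakOrderOn {α : Type*} (r : α → α → Prop) (S : Set α) : Prop :=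
  (∀ x ∈ S, ∀ y ∈ S, r x y ∨ r y x) ∧
  ∀ x ∈ S, ∀ y ∈ S, ∀ z ∈ S, r x y → r y z → r x z

/-- `r` is antisymmetric on `S`, i.e. the preferences are strict. -/
def StrictPrefsOn {α : Type*} (r : α → α → Prop) (S : Set α) : Prop :=
  ∀ x ∈ S, ∀ y ∈ S, r x y → r y x → x = y

/-- `r` is (naturally) single-peaked on `S` with respect to the natural linear
order of `α`: whenever `y` lies strictly between `x` and `z`, `x ≻ y` implies `y ≿ z`. -/
def SinglePeakedOn {α : Type*} [LinearOrder α] (r : α → α → Prop) (S : Set α) : Prop :=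
  ∀ x ∈ S, ∀ y ∈ S, ∀ z ∈ S,
    ((x < y ∧ y < z) ∨ (z < y ∧ y < x)) → StrictPref r x y → r y z

/-- Coalition preferences of an anonymous hedonic game: coalitions are compared
by their sizes via the size preferences `sp`. -/
def ahgPref {A : Type*} [DecidableEq A] (sp : A → ℕ → ℕ → Prop) :
    A → Finset A → Finset A → Prop :=
  fun i C D => sp i C.card D.card

/-- The size preferences of all agents are single-peaked with respect to a common
linear order on `{1,…,n}`, encoded by a ranking `f` that is injective on `{1,…,n}`
(`f x > f y` meaning that `x` is greater than `y` on the axis). -/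
def GenSinglePeakedProfile {A : Type*} (sp : A → ℕ → ℕ → Prop) (n : ℕ) : Prop :=
  ∃ f : ℕ → ℕ,
    (∀ x ∈ Set.Icc 1 n, ∀ y ∈ Set.Icc 1 n, f x = f y → x = y) ∧
    ∀ i : A, ∀ x ∈ Set.Icc 1 n, ∀ y ∈ Set.Icc 1 n, ∀ z ∈ Set.Icc 1 n,
      ((f y < f x ∧ f z < f y) ∨ (f y < f z ∧ f x < f y)) →
      StrictPref (sp i) x y → sp i y z


/-! ### Auxiliary construction -/

/-- Preference lists of the 7 agents over coalition sizes, best size first. -/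
def prefList : Fin 7 → List ℕ :=
  ![[2,3,6,5,4,1,7],[5,6,4,3,7,2,1],[5,6,3,2,1,4,7],[6,5,4,7,3,2,1],
    [3,2,6,5,4,1,7],[6,5,4,3,2,7,1],[6,3,2,5,4,7,1]]

/-- Rank of size `s` in agent `i`'s preference list (smaller is better). -/
def rk (i : Fin 7) (s : ℕ) : ℕ := (prefList i).idxOf s

/-- The size preferences: `x` is weakly preferred to `y` iff its rank is at most
that of `y`. -/
def mySp (i : Fin 7) (x y : ℕ) : Prop := rk i x ≤ rk i y

instance (i : Fin 7) (x y : ℕ) : Decidable (mySp i x y) :=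
  inferInstanceAs (Decidable (_ ≤ _))

/-- The common axis, given as a ranking of the sizes `1,…,7`. -/
def fax (s : ℕ) : ℕ := ([7,4,5,6,3,2,1] : List ℕ).idxOf s

/-- The partitions along the cycle (positions `4`–`9` form the 6-cycle). -/
def partAt : ℕ → Fin 7 → Finset (Fin 7)
  | 0 => ![{0}, {1}, {2}, {3}, {4}, {5}, {6}]
  | 1 => ![{0,2}, {1}, {0,2}, {3}, {4}, {5}, {6}]
  | 2 => ![{0,2}, {1,3}, {0,2}, {1,3}, {4}, {5}, {6}]
  | 3 => ![{0,2}, {1,3}, {0,2}, {1,3}, {4,6}, {5}, {4,6}]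
  | 4 => ![{0,2}, {1,3,5}, {0,2}, {1,3,5}, {4,6}, {1,3,5}, {4,6}]
  | 5 => ![{0}, {1,3,5}, {2,4,6}, {1,3,5}, {2,4,6}, {1,3,5}, {2,4,6}]
  | 6 => ![{0,1,3,5}, {0,1,3,5}, {2,4,6}, {0,1,3,5}, {2,4,6}, {0,1,3,5}, {2,4,6}]
  | 7 => ![{0,1,2,3,5}, {0,1,2,3,5}, {0,1,2,3,5}, {0,1,2,3,5}, {4,6}, {0,1,2,3,5}, {4,6}]
  | 8 => ![{0,4,6}, {1,2,3,5}, {1,2,3,5}, {1,2,3,5}, {0,4,6}, {1,2,3,5}, {0,4,6}]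
  | _ => ![{0,4,6}, {1,3,5}, {2}, {1,3,5}, {0,4,6}, {1,3,5}, {0,4,6}]

/-- The partitions on the path from the grand coalition to the cycle. -/
def gpartAt : ℕ → Fin 7 → Finset (Fin 7)
  | 0 => fun _ => Finset.univ
  | 1 => ![{0,1,3,4,5,6}, {0,1,3,4,5,6}, {2}, {0,1,3,4,5,6}, {0,1,3,4,5,6}, {0,1,3,4,5,6}, {0,1,3,4,5,6}]
  | _ => ![{0,1,3,5,6}, {0,1,3,5,6}, {2,4}, {0,1,3,5,6}, {2,4}, {0,1,3,5,6}, {0,1,3,5,6}]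

theorem step01 : ISStep (ahgPref mySp) (partAt 0) (partAt 1) := by
  unfold ISStep IsPartition IsISDeviation StrictPref ahgPref partAt; decide
theorem step12 : ISStep (ahgPref mySp) (partAt 1) (partAt 2) := by
  unfold ISStep IsPartition IsISDeviation StrictPref ahgPref partAt; decide
theorem step23 : ISStep (ahgPref mySp) (partAt 2) (partAt 3) := by
  unfold ISStep IsPartition IsISDeviation StrictPref ahgPref partAt; decide
theorem step34 : ISStep (ahgPref mySp) (partAt 3) (partAt 4) := by
  unfold ISStep IsPartition IsISDeviation StrictPref ahgPref partAt; decide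
theorem step45 : ISStep (ahgPref mySp) (partAt 4) (partAt 5) := by
  unfold ISStep IsPartition IsISDeviation StrictPref ahgPref partAt; decide
theorem step56 : ISStep (ahgPref mySp) (partAt 5) (partAt 6) := by
  unfold ISStep IsPartition IsISDeviation StrictPref ahgPref partAt; decide
theorem step67 : ISStep (ahgPref mySp) (partAt 6) (partAt 7) := by
  unfold ISStep IsPartition IsISDeviation StrictPref ahgPref partAt; decide
theorem step78 : ISStep (ahgPref mySp) (partAt 7) (partAt 8) := by
  unfold ISStep IsPartition IsISDeviation StrictPref ahgPref partAt; decide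
theorem step89 : ISStep (ahgPref mySp) (partAt 8) (partAt 9) := by
  unfold ISStep IsPartition IsISDeviation StrictPref ahgPref partAt; decide
theorem step94 : ISStep (ahgPref mySp) (partAt 9) (partAt 4) := by
  unfold ISStep IsPartition IsISDeviation StrictPref ahgPref partAt; decide
theorem stepG01 : ISStep (ahgPref mySp) (gpartAt 0) (gpartAt 1) := by
  unfold ISStep IsPartition IsISDeviation StrictPref ahgPref gpartAt; decide
theorem stepG12 : ISStep (ahgPref mySp) (gpartAt 1) (gpartAt 2) := by
  unfold ISStep IsPartition IsISDeviation StrictPref ahgPref gpartAt; decide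
theorem stepG26 : ISStep (ahgPref mySp) (gpartAt 2) (partAt 6) := by
  unfold ISStep IsPartition IsISDeviation StrictPref ahgPref gpartAt partAt; decide

/-- Infinite sequence starting at the singleton partition. -/
def seqS (k : ℕ) : Fin 7 → Finset (Fin 7) :=
  if k < 4 then partAt k else partAt (4 + (k - 4) % 6)

/-- Infinite sequence starting at the grand coalition. -/
def seqG (k : ℕ) : Fin 7 → Finset (Fin 7) :=
  if k < 3 then gpartAt k else partAt (4 + ((k - 3) + 2) % 6)

theorem cycStep : ∀ r < 6, ISStep (ahgPref mySp) (partAt (4 + r)) (partAt (4 + (r + 1) % 6)) := by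
  intro r hr
  interval_cases r
  · exact step45
  · exact step56
  · exact step67
  · exact step78
  · exact step89
  · exact step94

theorem seqS_step (k : ℕ) : ISStep (ahgPref mySp) (seqS k) (seqS (k + 1)) := by
  rcases Nat.lt_or_ge k 4 with h | h
  · interval_cases k
    · simpa [seqS] using step01
    · simpa [seqS] using step12
    · simpa [seqS] using step23
    · have h1 : seqS 3 = partAt 3 := by simp [seqS]
      have h2 : seqS 4 = partAt 4 := by norm_num [seqS]
      rw [h1, h2]; exact step34
  · obtain ⟨m, rfl⟩ := Nat.exists_eq_add_of_le h
    have h1 : seqS (4 + m) = partAt (4 + m % 6) := by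
      simp [seqS, Nat.add_sub_cancel_left]
    have h2 : seqS (4 + m + 1) = partAt (4 + (m + 1) % 6) := by
      have e : 4 + m + 1 - 4 = m + 1 := by omega
      simp only [seqS]
      rw [if_neg (by omega), e]
    have h3 : (m + 1) % 6 = (m % 6 + 1) % 6 := by omega
    rw [h1, h2, h3]
    exact cycStep (m % 6) (Nat.mod_lt _ (by norm_num))

theorem seqG_step (k : ℕ) : ISStep (ahgPref mySp) (seqG k) (seqG (k + 1)) := by
  rcases Nat.lt_or_ge k 3 with h | h
  · interval_cases k
    · simpa [seqG] using stepG01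
    · simpa [seqG] using stepG12
    · have h1 : seqG 2 = gpartAt 2 := by simp [seqG]
      have h2 : seqG 3 = partAt 6 := by norm_num [seqG]
      rw [h1, h2]; exact stepG26
  · obtain ⟨m, rfl⟩ := Nat.exists_eq_add_of_le h
    have h1 : seqG (3 + m) = partAt (4 + (m + 2) % 6) := by
      simp [seqG, Nat.add_sub_cancel_left]
    have h2 : seqG (3 + m + 1) = partAt (4 + (m + 3) % 6) := by
      have e : 3 + m + 1 - 3 = m + 1 := by omega
      simp only [seqG]
      rw [if_neg (by omega), e]
    have h3 : (m + 3) % 6 = ((m + 2) % 6 + 1) % 6 := by omega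
    rw [h1, h2, h3]
    exact cycStep ((m + 2) % 6) (Nat.mod_lt _ (by norm_num))

/-- There exists an anonymous hedonic game with exactly 7 agents, with strict
and generally single-peaked preferences, admitting an infinite sequence of IS
deviations starting from the singleton partition, and also one starting from
the grand coalition. -/
theorem ahg_7_strict_genSP_cycle_from_singletons_and_grand :
    ∃ sp : Fin 7 → ℕ → ℕ → Prop,
      (∀ i, WeakOrderOn (sp i) (Set.Icc 1 7)) ∧
      (∀ i, StrictPrefsOn (sp i) (Set.Icc 1 7)) ∧
      GenSinglePeakedProfile sp 7 ∧
      (∃ seq : ℕ → Fin 7 → Finset (Fin 7),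
        seq 0 = (fun a => {a}) ∧
        ∀ k, ISStep (ahgPref sp) (seq k) (seq (k + 1))) ∧
      (∃ seq : ℕ → Fin 7 → Finset (Fin 7),
        seq 0 = (fun _ => Finset.univ) ∧
        ∀ k, ISStep (ahgPref sp) (seq k) (seq (k + 1))) := by
  refine ⟨mySp, ?_, ?_, ?_, ?_, ?_⟩
  · exact fun i =>
      ⟨fun x _ y _ => Nat.le_total _ _, fun x _ y _ z _ h1 h2 => Nat.le_trans h1 h2⟩
  · have key : ∀ i : Fin 7, ∀ x ∈ Finset.Icc (1:ℕ) 7, ∀ y ∈ Finset.Icc (1:ℕ) 7,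
        mySp i x y → mySp i y x → x = y := by decide
    intro i x hx y hy h1 h2
    rw [Set.mem_Icc] at hx hy
    exact key i x (Finset.mem_Icc.mpr hx) y (Finset.mem_Icc.mpr hy) h1 h2
  · refine ⟨fax, ?_, ?_⟩
    · have key : ∀ x ∈ Finset.Icc (1:ℕ) 7, ∀ y ∈ Finset.Icc (1:ℕ) 7,
          fax x = fax y → x = y := by decide
      intro x hx y hy h
      rw [Set.mem_Icc] at hx hy
      exact key x (Finset.mem_Icc.mpr hx) y (Finset.mem_Icc.mpr hy) h
    · have key : ∀ i : Fin 7, ∀ x ∈ Finset.Icc (1:ℕ) 7, ∀ y ∈ Finset.Icc (1:ℕ) 7,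
          ∀ z ∈ Finset.Icc (1:ℕ) 7,
          ((fax y < fax x ∧ fax z < fax y) ∨ (fax y < fax z ∧ fax x < fax y)) →
          (mySp i x y ∧ ¬ mySp i y x) → mySp i y z := by decide
      intro i x hx y hy z hz hb hs
      rw [Set.mem_Icc] at hx hy hz
      exact key i x (Finset.mem_Icc.mpr hx) y (Finset.mem_Icc.mpr hy)
        z (Finset.mem_Icc.mpr hz) hb hs
  · refine ⟨seqS, ?_, seqS_step⟩
    have h0 : seqS 0 = partAt 0 := by norm_num [seqS]
    rw [h0]
    funext a
    fin_cases a <;> rfl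
  · refine ⟨seqG, ?_, seqG_step⟩
    norm_num [seqG, gpartAt]
end

section
/- In every anonymous hedonic game on n agents in which all agents have strict and naturally single-peaked preferences over coalition sizes, every sequence of IS deviations (from any initial partition) has length at most n^3 + n^2; in particular the dynamics of IS deviations always converges to an individually stable partition in O(n^3) steps. -/
open Finset

section Preference

variable {α : Type*} {r : α → α → Prop} {S : Set α} {x y z : α}

theorem WeakOrderOn.strictPref_of_strictPref_of_pref (h : WeakOrderOn r S) (hx : x ∈ S)
    (hy : y ∈ S) (hz : z ∈ S) (hxy : StrictPref r x y) (hyz : r y z) : StrictPref r x z :=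
  ⟨h.2 x hx y hy z hz hxy.1 hyz, fun hzx => hxy.2 (h.2 y hy z hz x hx hyz hzx)⟩

theorem WeakOrderOn.strictPref_of_pref_of_strictPref (h : WeakOrderOn r S) (hx : x ∈ S)
    (hy : y ∈ S) (hz : z ∈ S) (hxy : r x y) (hyz : StrictPref r y z) : StrictPref r x z :=
  ⟨h.2 x hx y hy z hz hxy hyz.1, fun hzx => hyz.2 (h.2 z hz x hx y hy hzx hxy)⟩

variable [LinearOrder α]

theorem strictPref_of_strictPref_of_lt_of_lt (hwo : WeakOrderOn r S) (hsp : SinglePeakedOn r S)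
    (hx : x ∈ S) (hy : y ∈ S) (hz : z ∈ S) (hxy : x < y) (hyz : y < z)
    (h : StrictPref r x y) : StrictPref r x z :=
  hwo.strictPref_of_strictPref_of_pref hx hy hz h (hsp x hx y hy z hz (.inl ⟨hxy, hyz⟩) h)

theorem strictPref_of_lt_of_lt_of_strictPref (hwo : WeakOrderOn r S) (hstrict : StrictPrefsOn r S)
    (hsp : SinglePeakedOn r S) (hx : x ∈ S) (hy : y ∈ S) (hz : z ∈ S) (hxy : x < y) (hyz : y < z)
    (h : StrictPref r x z) : StrictPref r y z := by
  by_cases hxy' : StrictPref r x y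
  · have hyz' : r y z := hsp x hx y hy z hz (.inl ⟨hxy, hyz⟩) hxy'
    exact ⟨hyz', fun hzy => hyz.ne (hstrict y hy z hz hyz' hzy)⟩
  · have hyx : r y x := by
      rcases hwo.1 x hx y hy with hxy'' | hyx
      · exact not_and_not_right.1 hxy' hxy''
      · exact hyx
    exact hwo.strictPref_of_pref_of_strictPref hy hx hz hyx h

end Preference

section SizePreference

variable {r : ℕ → ℕ → Prop} {n s a b : ℕ}

open Classical in
noncomputable def preferredSmallerSizes (r : ℕ → ℕ → Prop) (s : ℕ) : Finset ℕ :=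
  {t ∈ Ico 1 s | StrictPref r t s}

theorem mem_preferredSmallerSizes {t : ℕ} :
    t ∈ preferredSmallerSizes r s ↔ (1 ≤ t ∧ t < s) ∧ StrictPref r t s := by
  simp [preferredSmallerSizes]

theorem card_preferredSmallerSizes_le : #(preferredSmallerSizes r s) ≤ s - 1 := by
  classical
  exact (card_filter_le _ _).trans (by simp)

theorem preferredSmallerSizes_succ_subset (hwo : WeakOrderOn r (Set.Icc 1 n)) (hs : 1 ≤ s)
    (hsn : s + 1 ≤ n) (h : r (s + 1) s) :
    preferredSmallerSizes r (s + 1) ⊆ preferredSmallerSizes r s := by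
  intro t ht
  obtain ⟨⟨ht1, hts⟩, hpref⟩ := mem_preferredSmallerSizes.1 ht
  have hts' : t ≠ s := by rintro rfl; exact hpref.2 h
  refine mem_preferredSmallerSizes.2 ⟨⟨ht1, by omega⟩, ?_⟩
  exact hwo.strictPref_of_strictPref_of_pref ⟨ht1, by omega⟩ ⟨by omega, hsn⟩ ⟨hs, by omega⟩
    hpref h

theorem preferredSmallerSizes_subset_succ (hwo : WeakOrderOn r (Set.Icc 1 n))
    (hsp : SinglePeakedOn r (Set.Icc 1 n)) (hsn : s + 1 ≤ n) :
    preferredSmallerSizes r s ⊆ preferredSmallerSizes r (s + 1) := by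
  intro t ht
  obtain ⟨⟨ht1, hts⟩, hpref⟩ := mem_preferredSmallerSizes.1 ht
  refine mem_preferredSmallerSizes.2 ⟨⟨ht1, by omega⟩, ?_⟩
  exact strictPref_of_strictPref_of_lt_of_lt hwo hsp ⟨ht1, by omega⟩ ⟨by omega, by omega⟩
    ⟨by omega, hsn⟩ hts (Nat.lt_succ_self s) hpref

theorem card_preferredSmallerSizes_add_le (hwo : WeakOrderOn r (Set.Icc 1 n))
    (hstrict : StrictPrefsOn r (Set.Icc 1 n)) (hsp : SinglePeakedOn r (Set.Icc 1 n))
    (ha : 1 ≤ a) (hb : b ≤ n) (hab : a < b) (h : StrictPref r a b) :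
    #(preferredSmallerSizes r a) + (b - a) ≤ #(preferredSmallerSizes r b) := by
  have hdisj : Disjoint (preferredSmallerSizes r a) (Ico a b) :=
    disjoint_left.2 fun t ht ht' => by
      have := (mem_preferredSmallerSizes.1 ht).1.2
      simp only [mem_Ico] at ht'
      omega
  rw [← Nat.card_Ico a b, ← card_union_of_disjoint hdisj]
  refine card_le_card fun t ht => ?_
  rcases mem_union.1 ht with ht | ht
  · obtain ⟨⟨ht1, hta⟩, hpref⟩ := mem_preferredSmallerSizes.1 ht
    refine mem_preferredSmallerSizes.2 ⟨⟨ht1, by omega⟩, ?_⟩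
    exact hwo.strictPref_of_strictPref_of_pref ⟨ht1, by omega⟩ ⟨ha, by omega⟩ ⟨by omega, hb⟩
      hpref h.1
  · obtain ⟨hat, htb⟩ := mem_Ico.1 ht
    refine mem_preferredSmallerSizes.2 ⟨⟨by omega, htb⟩, ?_⟩
    rcases hat.eq_or_lt with rfl | hat
    · exact h
    · exact strictPref_of_lt_of_lt_of_strictPref hwo hstrict hsp ⟨ha, by omega⟩
        ⟨by omega, by omega⟩ ⟨by omega, hb⟩ hat htb h

theorem card_preferredSmallerSizes_le_add (hwo : WeakOrderOn r (Set.Icc 1 n)) (hb : 1 ≤ b)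
    (hbn : b ≤ n) (ha : a ≤ n) (h : StrictPref r a b) :
    #(preferredSmallerSizes r a) ≤ #(preferredSmallerSizes r b) + (a - b - 1) := by
  rw [← Nat.card_Ioo b a]
  refine (card_le_card fun t ht => ?_).trans (card_union_le _ _)
  obtain ⟨⟨ht1, hta⟩, hpref⟩ := mem_preferredSmallerSizes.1 ht
  rcases lt_trichotomy t b with htb | rfl | hbt
  · refine mem_union_left _ (mem_preferredSmallerSizes.2 ⟨⟨ht1, htb⟩, ?_⟩)
    exact hwo.strictPref_of_strictPref_of_pref ⟨ht1, by omega⟩ ⟨by omega, ha⟩ ⟨hb, hbn⟩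
      hpref h.1
  · exact absurd hpref.1 h.2
  · exact mem_union_right _ (mem_Ioo.2 ⟨hbt, hta⟩)

noncomputable def sizePotential (r : ℕ → ℕ → Prop) (n s : ℕ) : ℤ :=
  n * s - 2 * (n + 1) * #(preferredSmallerSizes r s)

theorem sizePotential_add_two_le_of_strictPref (hwo : WeakOrderOn r (Set.Icc 1 n))
    (hstrict : StrictPrefsOn r (Set.Icc 1 n)) (hsp : SinglePeakedOn r (Set.Icc 1 n))
    (ha : a ∈ Set.Icc 1 n) (hb : b ∈ Set.Icc 1 n) (h : StrictPref r a b) :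
    sizePotential r n b + 2 ≤ sizePotential r n a + n * (a - b) := by
  obtain ⟨ha1, han⟩ := ha
  obtain ⟨hb1, hbn⟩ := hb
  rw [sizePotential, sizePotential]
  rcases lt_trichotomy a b with hab | rfl | hba
  · have key := card_preferredSmallerSizes_add_le hwo hstrict hsp ha1 hbn hab h
    have key' : (#(preferredSmallerSizes r a) : ℤ) + (b - a) ≤ #(preferredSmallerSizes r b) := by
      omega
    nlinarith
  · exact absurd h.1 h.2
  · have key := card_preferredSmallerSizes_le_add hwo hb1 hbn han h
    have key' : (#(preferredSmallerSizes r a) : ℤ) ≤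
        #(preferredSmallerSizes r b) + (a - b - 1) := by
      omega
    nlinarith

theorem abs_sizePotential_le (hs : s ∈ Set.Icc 1 n) : |sizePotential r n s| ≤ n ^ 2 := by
  obtain ⟨hs1, hsn⟩ := hs
  have hβ : (#(preferredSmallerSizes r s) : ℤ) ≤ s - 1 := by
    have := card_preferredSmallerSizes_le (r := r) (s := s)
    omega
  have hs1' : (1 : ℤ) ≤ s := by exact_mod_cast hs1
  have hsn' : (s : ℤ) ≤ n := by exact_mod_cast hsn
  rw [sizePotential, abs_le]
  constructor <;> nlinarith

end SizePreference

theorem Finset.card_sub_card_of_erase_eq {α : Type*} [DecidableEq α] {s t : Finset α} {a : α}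
    (h : s.erase a = t.erase a) :
    (#s : ℤ) - #t = (if a ∈ s then 1 else 0) - (if a ∈ t then 1 else 0) := by
  have hcard (u : Finset α) : (#u : ℤ) = #(u.erase a) + if a ∈ u then 1 else 0 := by
    split_ifs with hu
    · rw [← card_erase_add_one hu, Nat.cast_succ]
    · rw [erase_eq_of_notMem hu, add_zero]
  rw [hcard s, hcard t, h]
  ring

section Deviation

variable {A : Type*} [DecidableEq A] {π π' : A → Finset A} {i j : A}

theorem IsPartition.mem_comm (hπ : IsPartition π) : i ∈ π j ↔ j ∈ π i :=
  ⟨fun h => hπ.2 i j h ▸ hπ.1 j, fun h => hπ.2 j i h ▸ hπ.1 i⟩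

theorem IsPartition.card_mem_Icc [Fintype A] (hπ : IsPartition π) (j : A) :
    #(π j) ∈ Set.Icc 1 (Fintype.card A) :=
  ⟨card_pos.2 ⟨j, hπ.1 j⟩, card_le_univ _⟩

theorem IsISDeviation.card_sub_card_of_ne {wp : A → Finset A → Finset A → Prop}
    (hπ : IsPartition π) (hπ' : IsPartition π') (h : IsISDeviation wp π π' i) (hj : j ≠ i) :
    (#(π' j) : ℤ) - #(π j) = (if j ∈ π' i then 1 else 0) - (if j ∈ π i then 1 else 0) := by
  rw [card_sub_card_of_erase_eq (h.2.1 j hj)]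
  simp only [hπ'.mem_comm (i := i) (j := j), hπ.mem_comm (i := i) (j := j)]

theorem IsISDeviation.sum_card_sub_card [Fintype A] {wp : A → Finset A → Finset A → Prop}
    (hπ : IsPartition π) (hπ' : IsPartition π') (h : IsISDeviation wp π π' i) :
    ∑ j, ((#(π' j) : ℤ) - #(π j)) = 2 * (#(π' i) - #(π i)) := by
  have hterm : ∀ j, (#(π' j) : ℤ) - #(π j) = ((if j ∈ π' i then 1 else 0) -
      (if j ∈ π i then 1 else 0)) + if j = i then (#(π' i) : ℤ) - #(π i) else 0 := by
    intro j
    by_cases hj : j = i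
    · subst hj
      simp [hπ.1 j, hπ'.1 j]
    · rw [h.card_sub_card_of_ne hπ hπ' hj, if_neg hj, add_zero]
  rw [sum_congr rfl fun j _ => hterm j, sum_add_distrib, sum_sub_distrib]
  simp only [sum_ite_mem, univ_inter, sum_const, Int.nsmul_eq_mul, mul_one, sum_ite_eq', mem_univ,
    if_true]
  ring

theorem IsISDeviation.card_preferredSmallerSizes_le [Fintype A] {sp : A → ℕ → ℕ → Prop}
    (hwo : WeakOrderOn (sp j) (Set.Icc 1 (Fintype.card A)))
    (hsp : SinglePeakedOn (sp j) (Set.Icc 1 (Fintype.card A)))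
    (hπ : IsPartition π) (hπ' : IsPartition π') (h : IsISDeviation (ahgPref sp) π π' i)
    (hj : j ≠ i) :
    #(preferredSmallerSizes (sp j) #(π' j)) ≤ #(preferredSmallerSizes (sp j) #(π j)) := by
  have hsize := h.card_sub_card_of_ne hπ hπ' hj
  obtain ⟨hs1, hsn⟩ := hπ.card_mem_Icc j
  obtain ⟨hs1', hsn'⟩ := hπ'.card_mem_Icc j
  by_cases hjoin : j ∈ π' i <;> by_cases hleave : j ∈ π i <;>
    simp only [hjoin, hleave, if_true, if_false] at hsize
  · rw [show #(π' j) = #(π j) by omega]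
  · have hpref : sp j #(π' j) #(π j) := h.2.2.2 j (mem_erase.2 ⟨hj, hjoin⟩)
    rw [show #(π' j) = #(π j) + 1 by omega] at hpref ⊢
    exact card_le_card (preferredSmallerSizes_succ_subset hwo hs1 (by omega) hpref)
  · rw [show #(π j) = #(π' j) + 1 by omega]
    exact card_le_card (preferredSmallerSizes_subset_succ hwo hsp (by omega))
  · rw [show #(π' j) = #(π j) by omega]

end Deviation

noncomputable def ahgPotential {A : Type*} [Fintype A] (sp : A → ℕ → ℕ → Prop)
    (π : A → Finset A) : ℤ :=
  ∑ j, sizePotential (sp j) (Fintype.card A) #(π j)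

section Potential

variable {A : Type*} [Fintype A] [DecidableEq A] {π π' : A → Finset A}

theorem IsPartition.abs_ahgPotential_le (sp : A → ℕ → ℕ → Prop) (hπ : IsPartition π) :
    |ahgPotential sp π| ≤ Fintype.card A ^ 3 := by
  calc |ahgPotential sp π| ≤ ∑ j, |sizePotential (sp j) (Fintype.card A) #(π j)| :=
        abs_sum_le_sum_abs _ _
    _ ≤ ∑ _j : A, (Fintype.card A : ℤ) ^ 2 :=
        sum_le_sum fun j _ => abs_sizePotential_le (hπ.card_mem_Icc j)
    _ = Fintype.card A ^ 3 := by rw [sum_const, card_univ, nsmul_eq_mul]; ring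

theorem ISStep.ahgPotential_add_two_le {sp : A → ℕ → ℕ → Prop}
    (hwo : ∀ i, WeakOrderOn (sp i) (Set.Icc 1 (Fintype.card A)))
    (hstrict : ∀ i, StrictPrefsOn (sp i) (Set.Icc 1 (Fintype.card A)))
    (hsp : ∀ i, SinglePeakedOn (sp i) (Set.Icc 1 (Fintype.card A)))
    (h : ISStep (ahgPref sp) π π') : ahgPotential sp π + 2 ≤ ahgPotential sp π' := by
  obtain ⟨hπ, hπ', i, hdev⟩ := h
  set n := Fintype.card A
  set θ : (A → Finset A) → A → ℤ := fun σ j => sizePotential (sp j) n #(σ j)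
  have hsplit : ahgPotential sp π' - ahgPotential sp π =
      θ π' i - θ π i + ∑ j ∈ univ.erase i, (θ π' j - θ π j) := by
    rw [ahgPotential, ahgPotential, ← sum_sub_distrib, ← add_sum_erase _ _ (mem_univ i)]
  have hmover : θ π i + 2 ≤ θ π' i + n * (#(π' i) - #(π i)) :=
    sizePotential_add_two_le_of_strictPref (hwo i) (hstrict i) (hsp i) (hπ'.card_mem_Icc i)
      (hπ.card_mem_Icc i) hdev.2.2.1
  have hothers : n * ∑ j ∈ univ.erase i, ((#(π' j) : ℤ) - #(π j)) ≤
      ∑ j ∈ univ.erase i, (θ π' j - θ π j) := by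
    rw [mul_sum]
    refine sum_le_sum fun j hj => ?_
    have := hdev.card_preferredSmallerSizes_le (hwo j) (hsp j) hπ hπ' (ne_of_mem_erase hj)
    simp only [θ, sizePotential]
    nlinarith
  have hsizes := hdev.sum_card_sub_card hπ hπ'
  rw [← add_sum_erase _ _ (mem_univ i)] at hsizes
  rw [show ∑ j ∈ univ.erase i, ((#(π' j) : ℤ) - #(π j)) = #(π' i) - #(π i) by linarith] at hothers
  linarith

end Potential

theorem add_mul_le_of_forall_add_le {f : ℕ → ℤ} {c : ℤ} {m : ℕ}
    (h : ∀ k < m, f k + c ≤ f (k + 1)) : f 0 + m * c ≤ f m := by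
  induction m with
  | zero => simp
  | succ m ih =>
    have := ih fun k hk => h k (by omega)
    have := h m (by omega)
    push_cast
    linarith

/-- In every anonymous hedonic game on `n` agents with strict and naturally
single-peaked preferences, every sequence of IS deviations has length at most
`n^3 + n^2`. -/
theorem ahg_strict_natSP_converges_in_n3
    (A : Type) [Fintype A] [DecidableEq A]
    (sp : A → ℕ → ℕ → Prop)
    (hwo : ∀ i, WeakOrderOn (sp i) (Set.Icc 1 (Fintype.card A)))
    (hstrict : ∀ i, StrictPrefsOn (sp i) (Set.Icc 1 (Fintype.card A)))
    (hsp : ∀ i, SinglePeakedOn (sp i) (Set.Icc 1 (Fintype.card A)))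
    (m : ℕ) (seq : ℕ → A → Finset A)
    (hstep : ∀ k < m, ISStep (ahgPref sp) (seq k) (seq (k + 1))) :
    m ≤ Fintype.card A ^ 3 + Fintype.card A ^ 2 := by
  rcases m with _ | k
  · exact Nat.zero_le _
  have hrise : ahgPotential sp (seq 0) + (k + 1 : ℕ) * 2 ≤ ahgPotential sp (seq (k + 1)) :=
    add_mul_le_of_forall_add_le fun j hj =>
      (hstep j hj).ahgPotential_add_two_le hwo hstrict hsp
  have hfirst := abs_le.1 ((hstep 0 k.succ_pos).1.abs_ahgPotential_le sp)
  have hlast := abs_le.1 ((hstep k k.lt_succ_self).2.1.abs_ahgPotential_le sp)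
  have : ((k + 1 : ℕ) : ℤ) ≤ Fintype.card A ^ 3 + Fintype.card A ^ 2 := by
    linarith [sq_nonneg (Fintype.card A : ℤ)]
  exact_mod_cast this
end

section
/- Let k ≥ 1 and let ≿_1,…,≿_k be weak orders over ratios each satisfying 1/3 ≻ 0 ≻ 1/2. Then there exists a hedonic diversity game whose agent set contains k blue agents b_1,…,b_k with b_i having preferences ≿_i, together with finitely many additional (red and blue) auxiliary agents with suitable preferences, such that some finite sequence of IS deviations starting from the singleton partition ends in a partition that contains {b_1,…,b_k} as a coalition. (Symmetrically, for any set of red agents whose preferences satisfy 2/3 ≻ 1 ≻ 1/2, the homogeneous coalition consisting of exactly these red agents can be created by IS dynamics starting from singleton coalitions.) -/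
/-- The fraction of red agents (members of `R`) in the coalition `C`. -/
def redRatio {A : Type*} [DecidableEq A] (R : Finset A) (C : Finset A) : ℚ :=
  ((R ∩ C).card : ℚ) / (C.card : ℚ)

/-- The set of ratios `p/q` with `0 ≤ p ≤ r` and `1 ≤ q ≤ n`. -/
def RatioSet (r n : ℕ) : Set ℚ :=
  {x : ℚ | ∃ p q : ℕ, p ≤ r ∧ 1 ≤ q ∧ q ≤ n ∧ x = (p : ℚ) / (q : ℚ)}

/-- Coalition preferences of a hedonic diversity game with red agents `R`:
coalitions are compared by their fraction of red agents via the ratio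
preferences `rp`. -/
def hdgPref {A : Type*} [DecidableEq A] (R : Finset A) (rp : A → ℚ → ℚ → Prop) :
    A → Finset A → Finset A → Prop :=
  fun i C D => rp i (redRatio R C) (redRatio R D)

/-- A coalition is homogeneous if it consists only of red agents or only of
blue agents. -/
def HomogeneousCoalition {A : Type*} [DecidableEq A] (R : Finset A) (C : Finset A) : Prop :=
  C ⊆ R ∨ ∀ a ∈ C, a ∉ R

/-- One step of the dynamics of IS deviations in a hedonic diversity game in
which the deviation satisfies solitary homogeneity: if the target coalition of
the deviator is homogeneous, then it is a singleton. -/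
def ISStepSH {A : Type*} [DecidableEq A] (R : Finset A) (rp : A → ℚ → ℚ → Prop)
    (π π' : A → Finset A) : Prop :=
  IsPartition π ∧ IsPartition π' ∧
  ∃ i, IsISDeviation (hdgPref R rp) π π' i ∧
    (HomogeneousCoalition R (π' i) → (π' i).card = 1)

def hdgMove {A : Type*} [DecidableEq A] (π : A → Finset A) (i : A) (T : Finset A) : A → Finset A :=
  fun j => if j = i ∨ j ∈ T then insert i T else if j ∈ π i then (π i).erase i else π j

section
variable {A : Type*} [DecidableEq A] (π : A → Finset A) (i : A) (T : Finset A)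

lemma hdgMove_self : hdgMove π i T i = insert i T := by simp [hdgMove]

lemma hdgMove_target {j : A} (hj : j ∈ T) : hdgMove π i T j = insert i T := by
  simp [hdgMove, hj]

lemma hdgMove_old {j : A} (h1 : j ≠ i) (h2 : j ∉ T) (h3 : j ∈ π i) :
    hdgMove π i T j = (π i).erase i := by simp [hdgMove, h1, h2, h3]

lemma hdgMove_other {j : A} (h1 : j ≠ i) (h2 : j ∉ T) (h3 : j ∉ π i) :
    hdgMove π i T j = π j := by simp [hdgMove, h1, h2, h3]

variable {π i T}

lemma hdgMove_isPartition (hπ : IsPartition π) (hiT : i ∉ T)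
    (hT : ∀ t ∈ T, π t = T) : IsPartition (hdgMove π i T) := by
  obtain ⟨hmem, hcoh⟩ := hπ
  have hTni : ∀ t ∈ T, i ∉ π t := fun t ht h => hiT ((hT t ht) ▸ h)
  constructor
  · intro j
    by_cases h1 : j = i ∨ j ∈ T
    · simp only [hdgMove, if_pos h1]
      rcases h1 with h1 | h1
      · simp [h1]
      · simp [h1]
    · push_neg at h1
      by_cases h3 : j ∈ π i
      · rw [hdgMove_old π i T h1.1 h1.2 h3]
        exact Finset.mem_erase.2 ⟨h1.1, h3⟩
      · rw [hdgMove_other π i T h1.1 h1.2 h3]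
        exact hmem j
  · intro a b hab
    by_cases hb : b = i ∨ b ∈ T
    · have hbv : hdgMove π i T b = insert i T := by
        rcases hb with hb | hb
        · rw [hb]; exact hdgMove_self π i T
        · exact hdgMove_target π i T hb
      rw [hbv] at hab ⊢
      rcases Finset.mem_insert.1 hab with ha | ha
      · rw [ha]; exact hdgMove_self π i T
      · exact hdgMove_target π i T ha
    · push_neg at hb
      by_cases hb3 : b ∈ π i
      · have hbv := hdgMove_old π i T hb.1 hb.2 hb3
        rw [hbv] at hab ⊢
        have ha1 : a ≠ i := (Finset.mem_erase.1 hab).1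
        have ha3 : a ∈ π i := (Finset.mem_erase.1 hab).2
        have ha2 : a ∉ T := by
          intro haT
          have : π a = T := hT a haT
          have : π a = π i := hcoh a i ha3
          exact hiT (hT a haT ▸ this ▸ hmem i)
        exact hdgMove_old π i T ha1 ha2 ha3
      · have hbv := hdgMove_other π i T hb.1 hb.2 hb3
        rw [hbv] at hab
        have hpab : π a = π b := hcoh a b hab
        have ha1 : a ≠ i := by
          rintro rfl
          exact hb3 (hpab ▸ hmem b)
        have ha2 : a ∉ T := by
          intro haT
          exact hb.2 (hT a haT ▸ hpab ▸ hmem b)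
        have ha3 : a ∉ π i := by
          intro h
          have : π a = π i := hcoh a i h
          exact hb3 (this ▸ hpab ▸ hmem b)
        rw [hdgMove_other π i T ha1 ha2 ha3, hbv, hpab]
end

section
variable {A : Type*} [DecidableEq A] {π : A → Finset A} {i : A} {T : Finset A}

lemma hdgMove_isStep (wp : A → Finset A → Finset A → Prop)
    (hπ : IsPartition π) (hiT : i ∉ T) (hTne : T.Nonempty)
    (hT : ∀ t ∈ T, π t = T)
    (hstrict : StrictPref (wp i) (insert i T) (π i))
    (hcons : ∀ j ∈ T, wp j (insert i T) T) :
    ISStep wp π (hdgMove π i T) := by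
  obtain ⟨hmem, hcoh⟩ := hπ
  refine ⟨⟨hmem, hcoh⟩, hdgMove_isPartition ⟨hmem, hcoh⟩ hiT hT, i, ?_, ?_, ?_, ?_⟩
  · rw [hdgMove_self]
    intro h
    obtain ⟨t, ht⟩ := hTne
    have h1 : t ∈ π i := h ▸ Finset.mem_insert_of_mem ht
    have h2 : π t = π i := hcoh t i h1
    exact hiT ((hT t ht) ▸ h2 ▸ hmem i)
  · intro j hj
    by_cases h2 : j ∈ T
    · rw [hdgMove_target π i T h2, hT j h2, Finset.erase_insert hiT,
        Finset.erase_eq_of_notMem hiT]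
    · by_cases h3 : j ∈ π i
      · rw [hdgMove_old π i T hj h2 h3, hcoh j i h3, Finset.erase_idem]
      · rw [hdgMove_other π i T hj h2 h3]
  · rw [hdgMove_self]; exact hstrict
  · intro j hj
    rw [hdgMove_self, Finset.erase_insert hiT] at hj
    rw [hdgMove_target π i T hj, hT j hj]
    exact hcons j hj
end

section
variable {A : Type*} [DecidableEq A]

lemma chain_to_seq {wp : A → Finset A → Finset A → Prop} {π₀ πF : A → Finset A}
    (h : Relation.ReflTransGen (ISStep wp) π₀ πF) :
    ∃ (m : ℕ) (seq : ℕ → A → Finset A), seq 0 = π₀ ∧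
      (∀ l < m, ISStep wp (seq l) (seq (l + 1))) ∧ seq m = πF := by
  induction h with
  | refl => exact ⟨0, fun _ => π₀, rfl, by omega, rfl⟩
  | tail hab hbc ih =>
    obtain ⟨m, seq, h0, hstep, hm⟩ := ih
    rename_i c
    refine ⟨m + 1, fun l => if l ≤ m then seq l else c, by simp [h0], ?_, by simp⟩
    intro l hl
    rcases Nat.lt_or_ge l m with h | h
    · simpa [Nat.le_of_lt h, Nat.succ_le_of_lt h] using hstep l h
    · have : l = m := by omega
      subst this
      simpa [hm] using hbc

variable {B : Type*} [DecidableEq B] (e : A ≃ B)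

lemma redRatio_map (R C : Finset A) :
    redRatio (R.map e.toEmbedding) (C.map e.toEmbedding) = redRatio R C := by
  unfold redRatio
  rw [← Finset.map_inter, Finset.card_map, Finset.card_map]

lemma isPartition_map {π : A → Finset A} (hπ : IsPartition π) :
    IsPartition (fun b => (π (e.symm b)).map e.toEmbedding) := by
  obtain ⟨hmem, hcoh⟩ := hπ
  constructor
  · intro b
    rw [Finset.mem_map_equiv]
    exact hmem _
  · intro a b hab
    rw [Finset.mem_map_equiv] at hab
    simp only
    rw [hcoh _ _ hab]

lemma isStep_map (R : Finset A) (rp : A → ℚ → ℚ → Prop) {π π' : A → Finset A}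
    (h : ISStep (hdgPref R rp) π π') :
    ISStep (hdgPref (R.map e.toEmbedding) (fun b => rp (e.symm b)))
      (fun b => (π (e.symm b)).map e.toEmbedding)
      (fun b => (π' (e.symm b)).map e.toEmbedding) := by
  obtain ⟨hπ, hπ', i, hne, herase, hstrict, hcons⟩ := h
  refine ⟨isPartition_map e hπ, isPartition_map e hπ', e i, ?_, ?_, ?_, ?_⟩
  · simp only [Equiv.symm_apply_apply]
    intro hcontra
    exact hne (Finset.map_injective e.toEmbedding hcontra)
  · intro b hb
    have hj : e.symm b ≠ i := by
      intro h'; exact hb (by rw [← h', Equiv.apply_symm_apply])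
    have h2 := congrArg (Finset.map e.toEmbedding) (herase _ hj)
    rw [Finset.map_erase, Finset.map_erase] at h2
    simpa using h2
  · simp only [Equiv.symm_apply_apply, hdgPref, StrictPref] at hstrict ⊢
    rw [redRatio_map e, redRatio_map e]
    exact hstrict
  · intro b hb
    simp only [Equiv.symm_apply_apply] at hb
    rw [show (Finset.map e.toEmbedding (π' i)).erase (e i)
          = ((π' i).erase i).map e.toEmbedding from
        (Finset.map_erase e.toEmbedding (π' i) i).symm, Finset.mem_map_equiv] at hb
    have h3 := hcons _ hb
    simp only [Equiv.symm_apply_apply, hdgPref] at h3 ⊢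
    rw [redRatio_map e, redRatio_map e]
    exact h3
end


namespace HDGAux

lemma weakOrderOn_mono {α : Type*} {r : α → α → Prop} {S : Set α}
    (h : WeakOrderOn r Set.univ) : WeakOrderOn r S :=
  ⟨fun x _ y _ => h.1 x trivial y trivial,
   fun x _ y _ z _ => h.2 x trivial y trivial z trivial⟩

abbrev Ag (k : ℕ) := Fin k ⊕ (Fin k ⊕ (Fin k ⊕ Fin 3))

variable {k : ℕ}

def blue (i : Fin k) : Ag k := Sum.inl i
def gr (i : Fin k) : Ag k := Sum.inr (Sum.inl i)
def gx (i : Fin k) : Ag k := Sum.inr (Sum.inr (Sum.inl i))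
def du (d : Fin 3) : Ag k := Sum.inr (Sum.inr (Sum.inr d))

/-- The red agents. -/
def Rset (k : ℕ) : Finset (Ag k) := Finset.univ.image gr ∪ {du 0}

@[simp] lemma blue_inj {i i' : Fin k} : blue i = blue i' ↔ i = i' := by simp [blue]
@[simp] lemma gr_inj {i i' : Fin k} : gr i = gr i' ↔ i = i' := by simp [gr]
@[simp] lemma gx_inj {i i' : Fin k} : gx i = gx i' ↔ i = i' := by simp [gx]
@[simp] lemma du_inj {d d' : Fin 3} : du (k := k) d = du d' ↔ d = d' := by simp [du]
@[simp] lemma blue_ne_gr {i i' : Fin k} : blue i ≠ gr i' := by simp [blue, gr]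
@[simp] lemma blue_ne_gx {i i' : Fin k} : blue i ≠ gx i' := by simp [blue, gx]
@[simp] lemma blue_ne_du {i : Fin k} {d : Fin 3} : blue i ≠ du d := by simp [blue, du]
@[simp] lemma gr_ne_blue {i i' : Fin k} : gr i ≠ blue i' := by simp [blue, gr]
@[simp] lemma gr_ne_gx {i i' : Fin k} : gr i ≠ gx i' := by simp [gr, gx]
@[simp] lemma gr_ne_du {i : Fin k} {d : Fin 3} : gr i ≠ du d := by simp [gr, du]
@[simp] lemma gx_ne_blue {i i' : Fin k} : gx i ≠ blue i' := by simp [blue, gx]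
@[simp] lemma gx_ne_gr {i i' : Fin k} : gx i ≠ gr i' := by simp [gr, gx]
@[simp] lemma gx_ne_du {i : Fin k} {d : Fin 3} : gx i ≠ du d := by simp [gx, du]
@[simp] lemma du_ne_blue {i : Fin k} {d : Fin 3} : du d ≠ blue i := by simp [blue, du]
@[simp] lemma du_ne_gr {i : Fin k} {d : Fin 3} : du d ≠ gr i := by simp [gr, du]
@[simp] lemma du_ne_gx {i : Fin k} {d : Fin 3} : du d ≠ gx i := by simp [gx, du]

@[simp] lemma gr_mem_R {i : Fin k} : gr i ∈ Rset k := by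
  simp [Rset]
@[simp] lemma du0_mem_R : du (k := k) 0 ∈ Rset k := by simp [Rset]
@[simp] lemma blue_not_mem_R {i : Fin k} : blue i ∉ Rset k := by simp [Rset]
@[simp] lemma gx_not_mem_R {i : Fin k} : gx i ∉ Rset k := by simp [Rset]
@[simp] lemma du_mem_R {d : Fin 3} : du (k := k) d ∈ Rset k ↔ d = 0 := by
  simp [Rset]

lemma redRatio_of_no_red {C : Finset (Ag k)} (h : ∀ a ∈ C, a ∉ Rset k) :
    redRatio (Rset k) C = 0 := by
  have : Rset k ∩ C = ∅ :=
    Finset.eq_empty_of_forall_notMem fun a ha =>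
      h a (Finset.mem_inter.1 ha).2 (Finset.mem_inter.1 ha).1
  simp [redRatio, this]

lemma redRatio_one_red {C : Finset (Ag k)} {r0 : Ag k} (h : Rset k ∩ C = {r0}) :
    redRatio (Rset k) C = 1 / (C.card : ℚ) := by
  simp [redRatio, h]

@[simp] lemma redRatio_singleton_blue {i : Fin k} :
    redRatio (Rset k) {blue i} = 0 :=
  redRatio_of_no_red (by simp)

@[simp] lemma redRatio_singleton_gx {i : Fin k} :
    redRatio (Rset k) {gx i} = 0 :=
  redRatio_of_no_red (by simp)

lemma redRatio_singleton_du {d : Fin 3} (hd : d ≠ 0) :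
    redRatio (Rset k) ({du d} : Finset (Ag k)) = 0 :=
  redRatio_of_no_red (by simp [hd])

lemma redRatio_pair_gr_gx (e : Fin k) :
    redRatio (Rset k) (insert (gx e) {gr e}) = 1 / 2 := by
  rw [redRatio_one_red (r0 := gr e)]
  · norm_num [Finset.card_insert_of_notMem]
  · ext a
    simp only [Finset.mem_inter, Finset.mem_insert, Finset.mem_singleton]
    constructor
    · rintro ⟨hR, rfl | rfl⟩
      · exact absurd hR gx_not_mem_R
      · rfl
    · rintro rfl
      simp

lemma redRatio_triple (e : Fin k) :
    redRatio (Rset k) (insert (blue e) (insert (gx e) {gr e})) = 1 / 3 := by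
  rw [redRatio_one_red (r0 := gr e)]
  · norm_num [Finset.card_insert_of_notMem]
  · ext a
    simp only [Finset.mem_inter, Finset.mem_insert, Finset.mem_singleton]
    constructor
    · rintro ⟨hR, rfl | rfl | rfl⟩
      · exact absurd hR blue_not_mem_R
      · exact absurd hR gx_not_mem_R
      · rfl
    · rintro rfl
      simp

lemma redRatio_pair_gr_blue (e : Fin k) :
    redRatio (Rset k) (insert (blue e) {gr e}) = 1 / 2 := by
  rw [redRatio_one_red (r0 := gr e)]
  · norm_num [Finset.card_insert_of_notMem]
  · ext a
    simp only [Finset.mem_inter, Finset.mem_insert, Finset.mem_singleton]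
    constructor
    · rintro ⟨hR, rfl | rfl⟩
      · exact absurd hR blue_not_mem_R
      · rfl
    · rintro rfl
      simp


/-! ## blocks and states -/

def Bset (k j : ℕ) : Finset (Ag k) :=
  (Finset.univ.filter (fun i : Fin k => (i : ℕ) ≤ j)).image blue

def Dset (k j : ℕ) : Finset (Ag k) :=
  ({du 0, du 1, du 2} : Finset (Ag k)) ∪
    (Finset.univ.filter (fun i : Fin k => 1 ≤ (i : ℕ) ∧ (i : ℕ) ≤ j)).image gx

@[simp] lemma mem_Bset {j : ℕ} {a : Ag k} :
    a ∈ Bset k j ↔ ∃ i : Fin k, (i : ℕ) ≤ j ∧ a = blue i := by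
  simp [Bset, eq_comm]

@[simp] lemma mem_Dset {j : ℕ} {a : Ag k} :
    a ∈ Dset k j ↔ (a = du 0 ∨ a = du 1 ∨ a = du 2) ∨
      ∃ i : Fin k, (1 ≤ (i : ℕ) ∧ (i : ℕ) ≤ j) ∧ a = gx i := by
  simp only [Dset, Finset.mem_union, Finset.mem_insert, Finset.mem_singleton,
    Finset.mem_image, Finset.mem_filter, Finset.mem_univ, true_and, eq_comm]

lemma blue_mem_Bset {j : ℕ} {i : Fin k} (h : (i : ℕ) ≤ j) : blue i ∈ Bset k j :=
  mem_Bset.2 ⟨i, h, rfl⟩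

lemma blue_not_mem_Bset {j : ℕ} {i : Fin k} (h : ¬ (i : ℕ) ≤ j) : blue i ∉ Bset k j := by
  simp only [mem_Bset]
  rintro ⟨i', hi', he⟩
  rw [blue_inj] at he
  exact h (he ▸ hi')

lemma gx_mem_Dset {j : ℕ} {i : Fin k} (h1 : 1 ≤ (i : ℕ)) (h2 : (i : ℕ) ≤ j) :
    gx i ∈ Dset k j := mem_Dset.2 (Or.inr ⟨i, ⟨h1, h2⟩, rfl⟩)

lemma du_mem_Dset {j : ℕ} {d : Fin 3} : du (k := k) d ∈ Dset k j := by
  fin_cases d <;> simp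

lemma gx_not_mem_Dset {j : ℕ} {i : Fin k} (h : ¬ (1 ≤ (i : ℕ) ∧ (i : ℕ) ≤ j)) :
    gx i ∉ Dset k j := by
  simp only [mem_Dset]
  rintro ((he | he | he) | ⟨i', hi', he⟩)
  · exact gx_ne_du he
  · exact gx_ne_du he
  · exact gx_ne_du he
  · rw [gx_inj] at he
    exact h (he ▸ hi')

lemma blue_not_mem_Dset {j : ℕ} {i : Fin k} : blue i ∉ Dset k j := by
  simp only [mem_Dset]
  rintro ((he | he | he) | ⟨i', hi', he⟩) <;> simp_all

lemma gr_not_mem_Dset {j : ℕ} {i : Fin k} : gr i ∉ Dset k j := by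
  simp only [mem_Dset]
  rintro ((he | he | he) | ⟨i', hi', he⟩) <;> simp_all

lemma Bset_no_red {j : ℕ} : ∀ a ∈ Bset k j, a ∉ Rset k := by
  simp only [mem_Bset]
  rintro a ⟨i, hi, rfl⟩
  exact blue_not_mem_R

lemma R_inter_Dset {j : ℕ} : Rset k ∩ Dset k j = {du 0} := by
  ext a
  simp only [Finset.mem_inter, Finset.mem_singleton]
  constructor
  · rintro ⟨hR, hD⟩
    rcases mem_Dset.1 hD with (rfl | rfl | rfl) | ⟨i, hi, rfl⟩
    · rfl
    · rw [du_mem_R] at hR; exact absurd hR (by decide)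
    · rw [du_mem_R] at hR; exact absurd hR (by decide)
    · exact absurd hR gx_not_mem_R
  · rintro rfl
    exact ⟨du0_mem_R, du_mem_Dset⟩

lemma card_Dset_ge {j : ℕ} : 3 ≤ (Dset k j).card := by
  have h : ({du 0, du 1, du 2} : Finset (Ag k)) ⊆ Dset k j := Finset.subset_union_left
  have := Finset.card_le_card h
  have hc : ({du 0, du 1, du 2} : Finset (Ag k)).card = 3 := by
    rw [Finset.card_insert_of_notMem (by simp), Finset.card_insert_of_notMem (by simp)]
    rfl
  omega

lemma redRatio_Dset {j : ℕ} :
    redRatio (Rset k) (Dset k j) = 1 / ((Dset k j).card : ℚ) :=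
  redRatio_one_red R_inter_Dset

lemma redRatio_Bset {j : ℕ} : redRatio (Rset k) (Bset k j) = 0 :=
  redRatio_of_no_red Bset_no_red

lemma redRatio_insert_blue_Bset {j : ℕ} {i : Fin k} :
    redRatio (Rset k) (insert (blue i) (Bset k j)) = 0 := by
  refine redRatio_of_no_red ?_
  intro a ha
  rcases Finset.mem_insert.1 ha with rfl | ha
  · exact blue_not_mem_R
  · exact Bset_no_red a ha

lemma redRatio_insert_gx_Dset {j : ℕ} {i : Fin k} (h : gx i ∉ Dset k j) :
    redRatio (Rset k) (insert (gx i) (Dset k j)) =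
      1 / (((Dset k j).card : ℚ) + 1) := by
  rw [redRatio_one_red (r0 := du 0)]
  · rw [Finset.card_insert_of_notMem h]
    push_cast
    ring_nf
  · rw [Finset.inter_insert_of_notMem gx_not_mem_R]
    exact R_inter_Dset


/-! ## preferences -/

def uX (q : ℚ) : ℕ := if q = 0 then 0 else if q = 1/3 ∨ q = 1/2 then 1 else 2
def uD (q : ℚ) : ℕ := if q = 0 then 0 else 1

def xpref (a b : ℚ) : Prop := uX b ≤ uX a
def dpref (a b : ℚ) : Prop := uD b ≤ uD a

def rp (P : Fin k → ℚ → ℚ → Prop) : Ag k → ℚ → ℚ → Prop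
  | Sum.inl i => P i
  | Sum.inr (Sum.inl _) => fun _ _ => True
  | Sum.inr (Sum.inr (Sum.inl _)) => xpref
  | Sum.inr (Sum.inr (Sum.inr d)) => if d = 0 then fun _ _ => True else dpref

variable {P : Fin k → ℚ → ℚ → Prop}

@[simp] lemma rp_blue {i : Fin k} : rp P (blue i) = P i := rfl
@[simp] lemma rp_gr {i : Fin k} : rp P (gr i) = fun _ _ => True := rfl
@[simp] lemma rp_gx {i : Fin k} : rp P (gx i) = xpref := rfl
@[simp] lemma rp_du0 : rp P (du 0) = fun _ _ => True := rfl
@[simp] lemma rp_du1 : rp P (du 1) = dpref := rfl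
@[simp] lemma rp_du2 : rp P (du 2) = dpref := rfl

lemma weakOrderOn_rp (hwoP : ∀ i, WeakOrderOn (P i) Set.univ) (a : Ag k) :
    WeakOrderOn (rp P a) Set.univ := by
  have hx : WeakOrderOn xpref Set.univ :=
    ⟨fun x _ y _ => le_total (uX y) (uX x), fun x _ y _ z _ h1 h2 => le_trans h2 h1⟩
  have hd : WeakOrderOn dpref Set.univ :=
    ⟨fun x _ y _ => le_total (uD y) (uD x), fun x _ y _ z _ h1 h2 => le_trans h2 h1⟩
  have ht : WeakOrderOn (fun _ _ : ℚ => True) Set.univ := by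
    exact ⟨fun _ _ _ _ => Or.inl trivial, fun _ _ _ _ _ _ _ _ => trivial⟩
  rcases a with i | i | i | d
  · exact hwoP i
  · exact ht
  · exact hx
  · by_cases hd0 : d = 0
    · subst hd0; exact ht
    · have : rp P (Sum.inr (Sum.inr (Sum.inr d)) : Ag k) = dpref := by
        simp [rp, hd0]
      rw [this]; exact hd

lemma uX_zero : uX 0 = 0 := by norm_num [uX]
lemma uX_third : uX (1/3) = 1 := by norm_num [uX]
lemma uX_half : uX (1/2) = 1 := by norm_num [uX]
lemma uX_other {q : ℚ} (h0 : q ≠ 0) (h3 : q ≠ 1/3) (h2 : q ≠ 1/2) : uX q = 2 := by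
  rw [one_div] at h3; rw [one_div] at h2
  simp [uX, h0, h3, h2, one_div]
lemma uD_zero : uD 0 = 0 := by norm_num [uD]
lemma uD_other {q : ℚ} (h0 : q ≠ 0) : uD q = 1 := by simp [uD, h0]

lemma strict_xpref {a b : ℚ} (h : uX b < uX a) : StrictPref xpref a b :=
  ⟨le_of_lt h, fun hc => absurd (lt_of_lt_of_le h hc) (lt_irrefl _)⟩

lemma strict_dpref {a b : ℚ} (h : uD b < uD a) : StrictPref dpref a b :=
  ⟨le_of_lt h, fun hc => absurd (lt_of_lt_of_le h hc) (lt_irrefl _)⟩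

/-- The small-dump-ratio facts. -/
lemma dump_ratio_facts {c : ℚ} (hc : 3 ≤ c) :
    (1 / c ≠ 0) ∧ uD (1 / c) = 1 := by
  have hc0 : c ≠ 0 := by positivity
  have h0 : (1 : ℚ) / c ≠ 0 := by positivity
  exact ⟨h0, uD_other h0⟩

lemma uX_dump {c : ℚ} (hc : 4 ≤ c) : uX (1 / c) = 2 := by
  have h0 : (1 : ℚ) / c ≠ 0 := by positivity
  have hlt : (1 : ℚ) / c < 1 / 3 := by
    rw [div_lt_div_iff₀ (by linarith) (by norm_num)]
    linarith
  refine uX_other h0 (by intro h; rw [h] at hlt; linarith) ?_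
  intro h; rw [h] at hlt; norm_num at hlt

/-! ## the states -/

def State (k : ℕ) (j : ℕ) : Ag k → Finset (Ag k)
  | Sum.inl i => if (i : ℕ) ≤ j then Bset k j else {blue i}
  | Sum.inr (Sum.inl i) => {gr i}
  | Sum.inr (Sum.inr (Sum.inl i)) =>
      if 1 ≤ (i : ℕ) ∧ (i : ℕ) ≤ j then Dset k j else {gx i}
  | Sum.inr (Sum.inr (Sum.inr _)) => Dset k j

lemma State_blue_le {j : ℕ} {i : Fin k} (h : (i : ℕ) ≤ j) :
    State k j (blue i) = Bset k j := by simp [State, blue, h]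
lemma State_blue_gt {j : ℕ} {i : Fin k} (h : ¬ (i : ℕ) ≤ j) :
    State k j (blue i) = {blue i} := by simp [State, blue, h]
lemma State_gr {j : ℕ} {i : Fin k} : State k j (gr i) = {gr i} := rfl
lemma State_gx_in {j : ℕ} {i : Fin k} (h : 1 ≤ (i : ℕ) ∧ (i : ℕ) ≤ j) :
    State k j (gx i) = Dset k j := by simp [State, gx, h]
lemma State_gx_out {j : ℕ} {i : Fin k} (h : ¬ (1 ≤ (i : ℕ) ∧ (i : ℕ) ≤ j)) :
    State k j (gx i) = {gx i} := by simp [State, gx, h]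
lemma State_du {j : ℕ} {d : Fin 3} : State k j (du d) = Dset k j := rfl

lemma isPartition_State (j : ℕ) : IsPartition (State k j) := by
  constructor
  · intro a
    rcases a with i | i | i | d
    · by_cases h : (i : ℕ) ≤ j
      · rw [show (Sum.inl i : Ag k) = blue i from rfl, State_blue_le h]
        exact blue_mem_Bset h
      · rw [show (Sum.inl i : Ag k) = blue i from rfl, State_blue_gt h]
        exact Finset.mem_singleton_self _
    · exact Finset.mem_singleton_self _
    · by_cases h : 1 ≤ (i : ℕ) ∧ (i : ℕ) ≤ j
      · rw [show (Sum.inr (Sum.inr (Sum.inl i)) : Ag k) = gx i from rfl, State_gx_in h]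
        exact gx_mem_Dset h.1 h.2
      · rw [show (Sum.inr (Sum.inr (Sum.inl i)) : Ag k) = gx i from rfl, State_gx_out h]
        exact Finset.mem_singleton_self _
    · exact du_mem_Dset
  · intro a b hab
    have hB : ∀ c ∈ Bset k j, State k j c = Bset k j := by
      intro c hc
      obtain ⟨i, hi, rfl⟩ := mem_Bset.1 hc
      exact State_blue_le hi
    have hD : ∀ c ∈ Dset k j, State k j c = Dset k j := by
      intro c hc
      rcases mem_Dset.1 hc with (rfl | rfl | rfl) | ⟨i, hi, rfl⟩
      · exact State_du
      · exact State_du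
      · exact State_du
      · exact State_gx_in hi
    rcases b with i | i | i | d
    · by_cases h : (i : ℕ) ≤ j
      · rw [show (Sum.inl i : Ag k) = blue i from rfl, State_blue_le h] at hab ⊢
        exact hB a hab
      · rw [show (Sum.inl i : Ag k) = blue i from rfl, State_blue_gt h] at hab ⊢
        rw [Finset.mem_singleton.1 hab]
        exact State_blue_gt h
    · rw [show (Sum.inr (Sum.inl i) : Ag k) = gr i from rfl, State_gr] at hab ⊢
      rw [Finset.mem_singleton.1 hab]
      exact State_gr
    · by_cases h : 1 ≤ (i : ℕ) ∧ (i : ℕ) ≤ j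
      · rw [show (Sum.inr (Sum.inr (Sum.inl i)) : Ag k) = gx i from rfl, State_gx_in h] at hab ⊢
        exact hD a hab
      · rw [show (Sum.inr (Sum.inr (Sum.inl i)) : Ag k) = gx i from rfl, State_gx_out h] at hab ⊢
        rw [Finset.mem_singleton.1 hab]
        exact State_gx_out h
    · rw [show (Sum.inr (Sum.inr (Sum.inr d)) : Ag k) = du d from rfl, State_du] at hab ⊢
      exact hD a hab


lemma strictPref_hdgPref {R : Finset (Ag k)} {rpp : Ag k → ℚ → ℚ → Prop} {i : Ag k}
    {C D : Finset (Ag k)}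
    (h : StrictPref (rpp i) (redRatio R C) (redRatio R D)) :
    StrictPref (hdgPref R rpp i) C D := ⟨h.1, h.2⟩

lemma redRatio_du01 :
    redRatio (Rset k) (insert (du 1) {du 0}) = 1 / 2 := by
  rw [redRatio_one_red (r0 := du 0)]
  · rw [Finset.card_insert_of_notMem (by simp)]
    norm_num
  · ext a
    simp only [Finset.mem_inter, Finset.mem_insert, Finset.mem_singleton]
    constructor
    · rintro ⟨hR, rfl | rfl⟩
      · rw [du_mem_R] at hR; exact absurd hR (by decide)
      · rfl
    · rintro rfl
      simp

lemma redRatio_du012 :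
    redRatio (Rset k) (insert (du 2) (insert (du 1) {du 0})) = 1 / 3 := by
  rw [redRatio_one_red (r0 := du 0)]
  · rw [Finset.card_insert_of_notMem (by simp), Finset.card_insert_of_notMem (by simp)]
    norm_num
  · ext a
    simp only [Finset.mem_inter, Finset.mem_insert, Finset.mem_singleton]
    constructor
    · rintro ⟨hR, rfl | rfl | rfl⟩
      · rw [du_mem_R] at hR; exact absurd hR (by decide)
      · rw [du_mem_R] at hR; exact absurd hR (by decide)
      · rfl
    · rintro rfl
      simp

lemma isPartition_sing : IsPartition (fun a : Ag k => ({a} : Finset (Ag k))) := by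
  constructor
  · intro i; exact Finset.mem_singleton_self i
  · intro a b hab
    rw [Finset.mem_singleton.1 hab]

def Sing (k : ℕ) : Ag k → Finset (Ag k) := fun a => {a}

@[simp] lemma Sing_eval {a : Ag k} : Sing k a = {a} := rfl

def M1 (k : ℕ) : Ag k → Finset (Ag k) := hdgMove (Sing k) (du 1) {du 0}
def M2 (k : ℕ) : Ag k → Finset (Ag k) := hdgMove (M1 k) (du 2) (insert (du 1) {du 0})

lemma hT1 : ∀ t ∈ ({du 0} : Finset (Ag k)), Sing k t = {du 0} := by
  rintro t ht
  rw [Finset.mem_singleton.1 ht, Sing_eval]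

lemma isPartition_M1 : IsPartition (M1 k) :=
  hdgMove_isPartition isPartition_sing (by simp) hT1

lemma M1_du1 : M1 k (du 1) = insert (du 1) {du 0} := hdgMove_self _ _ _
lemma M1_du0 : M1 k (du 0) = insert (du 1) {du 0} :=
  hdgMove_target _ _ _ (Finset.mem_singleton_self _)
lemma M1_other {a : Ag k} (h1 : a ≠ du 1) (h2 : a ≠ du 0) : M1 k a = {a} :=
  hdgMove_other _ _ _ h1 (by simp [h2]) (by simp [h1])

lemma hT2 : ∀ t ∈ (insert (du 1) {du 0} : Finset (Ag k)), M1 k t = insert (du 1) {du 0} := by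
  intro t ht
  rcases Finset.mem_insert.1 ht with rfl | ht
  · exact M1_du1
  · rw [Finset.mem_singleton.1 ht]; exact M1_du0

lemma init_chain {P : Fin k → ℚ → ℚ → Prop} :
    Relation.ReflTransGen (ISStep (hdgPref (Rset k) (rp P)))
      (Sing k) (State k 0) := by
  have step1 : ISStep (hdgPref (Rset k) (rp P)) (Sing k) (M1 k) := by
    apply hdgMove_isStep _ isPartition_sing (by simp) ⟨du 0, Finset.mem_singleton_self _⟩ hT1
    · apply strictPref_hdgPref
      rw [redRatio_du01, redRatio_singleton_du (by decide), rp_du1]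
      exact strict_dpref (by rw [uD_zero, uD_other (by norm_num)]; omega)
    · rintro t ht
      rw [Finset.mem_singleton.1 ht]
      exact trivial
  have step2 : ISStep (hdgPref (Rset k) (rp P)) (M1 k) (M2 k) := by
    apply hdgMove_isStep _ isPartition_M1 (by simp) ⟨du 0, by simp⟩ hT2
    · apply strictPref_hdgPref
      rw [redRatio_du012, M1_other (by simp) (by simp),
        redRatio_singleton_du (by decide), rp_du2]
      exact strict_dpref (by rw [uD_zero, uD_other (by norm_num)]; omega)
    · intro t ht
      rcases Finset.mem_insert.1 ht with rfl | ht
      · show rp P (du 1) _ _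
        rw [rp_du1, redRatio_du012, redRatio_du01]
        show uD _ ≤ uD _
        rw [uD_other (by norm_num), uD_other (by norm_num)]
      · rw [Finset.mem_singleton.1 ht]
        exact trivial
  have hfin : M2 k = State k 0 := by
    funext a
    have hM2du1 : M2 k (du 1) = insert (du 2) (insert (du 1) {du 0}) :=
      hdgMove_target _ _ _ (by simp)
    have hM2du0 : M2 k (du 0) = insert (du 2) (insert (du 1) {du 0}) :=
      hdgMove_target _ _ _ (by simp)
    have hM2du2 : M2 k (du 2) = insert (du 2) (insert (du 1) {du 0}) := hdgMove_self _ _ _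
    have hM2other : ∀ a : Ag k, a ≠ du 0 → a ≠ du 1 → a ≠ du 2 → M2 k a = {a} := by
      intro a h0 h1 h2
      have : M2 k a = M1 k a :=
        hdgMove_other _ _ _ h2 (by simp [h1, h0]) (by rw [M1_other (by simp) (by simp)]; simp [h2])
      rw [this, M1_other h1 h0]
    have hD0 : insert (du 2) (insert (du 1) {du 0}) = Dset k 0 := by
      ext a
      simp only [Finset.mem_insert, Finset.mem_singleton, mem_Dset]
      constructor
      · rintro (rfl | rfl | rfl) <;> tauto
      · rintro ((rfl | rfl | rfl) | ⟨i, ⟨h1, h2⟩, rfl⟩) <;> first | tauto | omega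
    rcases a with i | i | i | d
    · show M2 k (blue i) = State k 0 (blue i)
      rw [hM2other (blue i) (by simp) (by simp) (by simp)]
      by_cases h : (i : ℕ) ≤ 0
      · rw [State_blue_le h]
        ext a
        simp only [Finset.mem_singleton, mem_Bset]
        constructor
        · rintro rfl; exact ⟨i, h, rfl⟩
        · rintro ⟨i', hi', rfl⟩
          rw [blue_inj]
          exact Fin.ext (by omega)
      · rw [State_blue_gt h]
    · show M2 k (gr i) = State k 0 (gr i)
      rw [hM2other (gr i) (by simp) (by simp) (by simp), State_gr]
    · show M2 k (gx i) = State k 0 (gx i)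
      rw [hM2other (gx i) (by simp) (by simp) (by simp), State_gx_out (by omega)]
    · show M2 k (du d) = State k 0 (du d)
      rw [State_du, ← hD0]
      fin_cases d
      · exact hM2du0
      · exact hM2du1
      · exact hM2du2
  have h2 : Relation.ReflTransGen (ISStep (hdgPref (Rset k) (rp P))) (Sing k) (M2 k) :=
    Relation.ReflTransGen.tail (Relation.ReflTransGen.single step1) step2
  rwa [hfin] at h2

/-! ## the gadget steps -/

def GS1 (k j : ℕ) (e : Fin k) : Ag k → Finset (Ag k) :=
  hdgMove (State k j) (gx e) {gr e}
def GS2 (k j : ℕ) (e : Fin k) : Ag k → Finset (Ag k) :=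
  hdgMove (GS1 k j e) (blue e) (insert (gx e) {gr e})
def GS3 (k j : ℕ) (e : Fin k) : Ag k → Finset (Ag k) :=
  hdgMove (GS2 k j e) (gx e) (Dset k j)
def GS4 (k j : ℕ) (e : Fin k) : Ag k → Finset (Ag k) :=
  hdgMove (GS3 k j e) (blue e) (Bset k j)

variable {j : ℕ} {e : Fin k}

lemma gr_not_mem_Bset {i : Fin k} : gr i ∉ Bset k j := by
  simp only [mem_Bset]
  rintro ⟨i', -, h⟩
  exact gr_ne_blue h

lemma gx_not_mem_Bset {i : Fin k} : gx i ∉ Bset k j := by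
  simp only [mem_Bset]
  rintro ⟨i', -, h⟩
  exact gx_ne_blue h

lemma du_not_mem_Bset {d : Fin 3} : du (k := k) d ∉ Bset k j := by
  simp only [mem_Bset]
  rintro ⟨i', -, h⟩
  exact du_ne_blue h

lemma GS1_self : GS1 k j e (gx e) = insert (gx e) {gr e} := hdgMove_self _ _ _

lemma GS1_gr : GS1 k j e (gr e) = insert (gx e) {gr e} :=
  hdgMove_target _ _ _ (by simp)

lemma GS1_other (he : (e : ℕ) = j + 1) {a : Ag k} (h1 : a ≠ gx e) (h2 : a ≠ gr e) :
    GS1 k j e a = State k j a :=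
  hdgMove_other _ _ _ h1 (by simp [h2])
    (by rw [State_gx_out (by omega)]; simp [h1])

lemma GS2_self : GS2 k j e (blue e) = insert (blue e) (insert (gx e) {gr e}) :=
  hdgMove_self _ _ _

lemma GS2_T {a : Ag k} (ha : a ∈ (insert (gx e) {gr e} : Finset (Ag k))) :
    GS2 k j e a = insert (blue e) (insert (gx e) {gr e}) :=
  hdgMove_target _ _ _ ha

lemma GS2_other (he : (e : ℕ) = j + 1) {a : Ag k}
    (h0 : a ≠ blue e) (h1 : a ≠ gx e) (h2 : a ≠ gr e) :
    GS2 k j e a = State k j a := by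
  have hb : GS1 k j e (blue e) = {blue e} := by
    rw [GS1_other he (by simp) (by simp), State_blue_gt (by omega)]
  rw [GS2, hdgMove_other _ _ _ h0 (by simp [h1, h2]) (by rw [hb]; simp [h0]),
    GS1_other he h1 h2]

lemma GS3_self : GS3 k j e (gx e) = insert (gx e) (Dset k j) := hdgMove_self _ _ _

lemma GS3_D {a : Ag k} (ha : a ∈ Dset k j) : GS3 k j e a = insert (gx e) (Dset k j) :=
  hdgMove_target _ _ _ ha

lemma C3_erase : ((insert (blue e) (insert (gx e) {gr e}) : Finset (Ag k))).erase (gx e)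
    = insert (blue e) {gr e} := by
  ext a
  simp only [Finset.mem_erase, Finset.mem_insert, Finset.mem_singleton]
  constructor
  · rintro ⟨hne, rfl | rfl | rfl⟩
    · exact Or.inl rfl
    · exact absurd rfl hne
    · exact Or.inr rfl
  · rintro (rfl | rfl)
    · exact ⟨by simp, Or.inl rfl⟩
    · exact ⟨by simp, Or.inr (Or.inr rfl)⟩

lemma GS3_blue : GS3 k j e (blue e) = insert (blue e) {gr e} := by
  rw [GS3, hdgMove_old _ _ _ (by simp) blue_not_mem_Dset
    (by rw [GS2_T (by simp)]; simp), GS2_T (by simp), C3_erase]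

lemma GS3_gr : GS3 k j e (gr e) = insert (blue e) {gr e} := by
  rw [GS3, hdgMove_old _ _ _ (by simp) gr_not_mem_Dset
    (by rw [GS2_T (by simp)]; simp), GS2_T (by simp), C3_erase]

lemma GS3_other (he : (e : ℕ) = j + 1) {a : Ag k}
    (h0 : a ≠ blue e) (h1 : a ≠ gx e) (h2 : a ≠ gr e) (hD : a ∉ Dset k j) :
    GS3 k j e a = State k j a := by
  rw [GS3, hdgMove_other _ _ _ h1 hD
    (by rw [GS2_T (by simp)]; simp [h0, h1, h2]), GS2_other he h0 h1 h2]

lemma GS4_self : GS4 k j e (blue e) = insert (blue e) (Bset k j) := hdgMove_self _ _ _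

lemma GS4_B {a : Ag k} (ha : a ∈ Bset k j) : GS4 k j e a = insert (blue e) (Bset k j) :=
  hdgMove_target _ _ _ ha

lemma GS4_gr : GS4 k j e (gr e) = {gr e} := by
  rw [GS4, hdgMove_old _ _ _ (by simp) gr_not_mem_Bset
    (by rw [GS3_blue]; simp), GS3_blue, Finset.erase_insert (by simp)]

lemma GS4_other (he : (e : ℕ) = j + 1) {a : Ag k}
    (h0 : a ≠ blue e) (h2 : a ≠ gr e) (hB : a ∉ Bset k j) :
    GS4 k j e a = GS3 k j e a :=
  hdgMove_other _ _ _ h0 hB (by rw [GS3_blue]; simp [h0, h2])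

lemma Bset_succ (he : (e : ℕ) = j + 1) :
    insert (blue e) (Bset k j) = Bset k (j + 1) := by
  ext a
  simp only [Finset.mem_insert, mem_Bset]
  constructor
  · rintro (rfl | ⟨i, hi, rfl⟩)
    · exact ⟨e, by omega, rfl⟩
    · exact ⟨i, by omega, rfl⟩
  · rintro ⟨i, hi, rfl⟩
    by_cases h : (i : ℕ) ≤ j
    · exact Or.inr ⟨i, h, rfl⟩
    · left
      rw [blue_inj]
      exact Fin.ext (by omega)

lemma Dset_succ (he : (e : ℕ) = j + 1) :
    insert (gx e) (Dset k j) = Dset k (j + 1) := by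
  ext a
  simp only [Finset.mem_insert, mem_Dset]
  constructor
  · rintro (rfl | (h | ⟨i, hi, rfl⟩))
    · exact Or.inr ⟨e, by omega, rfl⟩
    · exact Or.inl h
    · exact Or.inr ⟨i, by omega, rfl⟩
  · rintro (h | ⟨i, ⟨hi1, hi2⟩, rfl⟩)
    · exact Or.inr (Or.inl h)
    · by_cases h : (i : ℕ) ≤ j
      · exact Or.inr (Or.inr ⟨i, ⟨hi1, h⟩, rfl⟩)
      · left
        rw [gx_inj]
        exact Fin.ext (by omega)

lemma uX_le_two (q : ℚ) : uX q ≤ 2 := by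
  unfold uX
  split
  · omega
  · split <;> omega

lemma GS4_eq_State (he : (e : ℕ) = j + 1) : GS4 k j e = State k (j + 1) := by
  funext a
  rcases a with i | i | i | d
  · show GS4 k j e (blue i) = State k (j + 1) (blue i)
    by_cases h : (i : ℕ) ≤ j
    · rw [GS4_B (blue_mem_Bset h), Bset_succ he, State_blue_le (by omega)]
    · by_cases h2 : (i : ℕ) = j + 1
      · have : i = e := Fin.ext (by omega)
        subst this
        rw [GS4_self, Bset_succ he, State_blue_le (by omega)]
      · rw [GS4_other he (by rw [Ne, blue_inj]; intro hc; subst hc; omega)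
          (by simp) (blue_not_mem_Bset h),
          GS3_other he (by rw [Ne, blue_inj]; intro hc; subst hc; omega) (by simp) (by simp)
            blue_not_mem_Dset,
          State_blue_gt h, State_blue_gt (by omega)]
  · show GS4 k j e (gr i) = State k (j + 1) (gr i)
    by_cases h : i = e
    · subst h
      rw [GS4_gr, State_gr]
    · rw [GS4_other he (by simp) (by rw [Ne, gr_inj]; exact h) gr_not_mem_Bset,
        GS3_other he (by simp) (by simp) (by rw [Ne, gr_inj]; exact h) gr_not_mem_Dset,
        State_gr, State_gr]
  · show GS4 k j e (gx i) = State k (j + 1) (gx i)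
    by_cases h : 1 ≤ (i : ℕ) ∧ (i : ℕ) ≤ j
    · rw [GS4_other he (by simp) (by simp) gx_not_mem_Bset, GS3_D (gx_mem_Dset h.1 h.2),
        Dset_succ he, State_gx_in (by omega)]
    · by_cases h2 : i = e
      · subst h2
        rw [GS4_other he (by simp) (by simp) gx_not_mem_Bset, GS3_self, Dset_succ he,
          State_gx_in (by omega)]
      · have hne : (i : ℕ) ≠ j + 1 := fun hc => h2 (Fin.ext (by omega))
        rw [GS4_other he (by simp) (by simp) gx_not_mem_Bset,
          GS3_other he (by simp) (by rw [Ne, gx_inj]; exact h2) (by simp)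
            (gx_not_mem_Dset h),
          State_gx_out h, State_gx_out (by omega)]
  · show GS4 k j e (du d) = State k (j + 1) (du d)
    rw [GS4_other he (by simp) (by simp) du_not_mem_Bset, GS3_D du_mem_Dset,
      Dset_succ he, State_du]


/-! ## the four gadget steps are IS steps -/

section GadgetSteps

variable {P : Fin k → ℚ → ℚ → Prop}

lemma P_refl (hwoP : ∀ i, WeakOrderOn (P i) Set.univ) (i : Fin k) (x : ℚ) : P i x x :=
  ((hwoP i).1 x trivial x trivial).elim id id

variable (hwoP : ∀ i, WeakOrderOn (P i) Set.univ)
  (hP : ∀ i, StrictPref (P i) (1 / 3) 0 ∧ StrictPref (P i) 0 (1 / 2))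
  (he : (e : ℕ) = j + 1)

include he

lemma gstep1 : ISStep (hdgPref (Rset k) (rp P)) (State k j) (GS1 k j e) := by
  apply hdgMove_isStep _ (isPartition_State j) (by simp) ⟨gr e, Finset.mem_singleton_self _⟩
  · intro t ht
    rw [Finset.mem_singleton.1 ht, State_gr]
  · apply strictPref_hdgPref
    rw [redRatio_pair_gr_gx, State_gx_out (by omega), redRatio_singleton_gx, rp_gx]
    exact strict_xpref (by rw [uX_zero, uX_half]; omega)
  · intro t ht
    rw [Finset.mem_singleton.1 ht]
    exact trivial

lemma isPartition_GS1 : IsPartition (GS1 k j e) :=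
  hdgMove_isPartition (isPartition_State j) (by simp)
    (fun t ht => by rw [Finset.mem_singleton.1 ht, State_gr])

include hP in
lemma gstep2 : ISStep (hdgPref (Rset k) (rp P)) (GS1 k j e) (GS2 k j e) := by
  apply hdgMove_isStep _ (isPartition_GS1 he) (by simp) ⟨gr e, by simp⟩
  · intro t ht
    rcases Finset.mem_insert.1 ht with rfl | ht
    · exact GS1_self
    · rw [Finset.mem_singleton.1 ht]; exact GS1_gr
  · apply strictPref_hdgPref
    rw [redRatio_triple, GS1_other he (by simp) (by simp), State_blue_gt (by omega),
      redRatio_singleton_blue, rp_blue]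
    exact (hP e).1
  · intro t ht
    rcases Finset.mem_insert.1 ht with rfl | ht
    · show rp P (gx e) _ _
      rw [rp_gx, redRatio_triple, redRatio_pair_gr_gx]
      show uX _ ≤ uX _
      rw [uX_third, uX_half]
    · rw [Finset.mem_singleton.1 ht]
      exact trivial

lemma isPartition_GS2 : IsPartition (GS2 k j e) :=
  hdgMove_isPartition (isPartition_GS1 he) (by simp)
    (fun t ht => by
      rcases Finset.mem_insert.1 ht with rfl | ht
      · exact GS1_self
      · rw [Finset.mem_singleton.1 ht]; exact GS1_gr)

lemma GS2_Dset {a : Ag k} (ha : a ∈ Dset k j) : GS2 k j e a = Dset k j := by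
  rcases mem_Dset.1 ha with (rfl | rfl | rfl) | ⟨i, hi, rfl⟩
  · rw [GS2_other he (by simp) (by simp) (by simp), State_du]
  · rw [GS2_other he (by simp) (by simp) (by simp), State_du]
  · rw [GS2_other he (by simp) (by simp) (by simp), State_du]
  · rw [GS2_other he (by simp) (by rw [Ne, gx_inj]; intro hc; subst hc; omega) (by simp),
      State_gx_in hi]

lemma gxe_not_mem_Dset : gx e ∉ Dset k j := gx_not_mem_Dset (by omega)

lemma gstep3 : ISStep (hdgPref (Rset k) (rp P)) (GS2 k j e) (GS3 k j e) := by
  have hcard : (3 : ℚ) ≤ ((Dset k j).card : ℚ) := by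
    exact_mod_cast (card_Dset_ge (k := k) (j := j))
  have hnew : redRatio (Rset k) (insert (gx e) (Dset k j))
      = 1 / (((Dset k j).card : ℚ) + 1) := redRatio_insert_gx_Dset (gxe_not_mem_Dset he)
  have hold : redRatio (Rset k) (Dset k j) = 1 / ((Dset k j).card : ℚ) := redRatio_Dset
  have hnew2 : uX (redRatio (Rset k) (insert (gx e) (Dset k j))) = 2 := by
    rw [hnew]; exact uX_dump (by linarith)
  have hnew0 : redRatio (Rset k) (insert (gx e) (Dset k j)) ≠ 0 := by
    rw [hnew]; positivity
  have hold0 : redRatio (Rset k) (Dset k j) ≠ 0 := by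
    rw [hold]; positivity
  apply hdgMove_isStep _ (isPartition_GS2 he) (gxe_not_mem_Dset he) ⟨du 0, du_mem_Dset⟩
    (fun t ht => GS2_Dset he ht)
  · apply strictPref_hdgPref
    rw [GS2_T (by simp), redRatio_triple, rp_gx]
    refine strict_xpref ?_
    rw [hnew2, uX_third]
    omega
  · intro t ht
    rcases mem_Dset.1 ht with (rfl | rfl | rfl) | ⟨i, hi, rfl⟩
    · exact trivial
    · show rp P (du 1) _ _
      rw [rp_du1]
      show uD _ ≤ uD _
      rw [uD_other hnew0, uD_other hold0]
    · show rp P (du 2) _ _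
      rw [rp_du2]
      show uD _ ≤ uD _
      rw [uD_other hnew0, uD_other hold0]
    · show rp P (gx i) _ _
      rw [rp_gx]
      show uX _ ≤ uX _
      rw [hnew2]
      exact uX_le_two _

lemma isPartition_GS3 : IsPartition (GS3 k j e) :=
  hdgMove_isPartition (isPartition_GS2 he) (gxe_not_mem_Dset he)
    (fun t ht => GS2_Dset he ht)

lemma GS3_Bset {a : Ag k} (ha : a ∈ Bset k j) : GS3 k j e a = Bset k j := by
  obtain ⟨i, hi, rfl⟩ := mem_Bset.1 ha
  rw [GS3_other he (by rw [Ne, blue_inj]; intro hc; subst hc; omega) (by simp) (by simp)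
    blue_not_mem_Dset, State_blue_le hi]

include hwoP hP in
lemma gstep4 : ISStep (hdgPref (Rset k) (rp P)) (GS3 k j e) (GS4 k j e) := by
  have hk0 : 0 < k := lt_of_le_of_lt (Nat.zero_le _) e.isLt
  apply hdgMove_isStep _ (isPartition_GS3 he) (blue_not_mem_Bset (by omega))
    ⟨blue ⟨0, hk0⟩, blue_mem_Bset (by simp)⟩ (fun t ht => GS3_Bset he ht)
  · apply strictPref_hdgPref
    rw [redRatio_insert_blue_Bset, GS3_blue, redRatio_pair_gr_blue, rp_blue]
    exact (hP e).2
  · intro t ht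
    obtain ⟨i, hi, rfl⟩ := mem_Bset.1 ht
    show rp P (blue i) _ _
    rw [rp_blue, redRatio_insert_blue_Bset, redRatio_Bset]
    exact P_refl hwoP i 0

end GadgetSteps


lemma state_chain {P : Fin k → ℚ → ℚ → Prop}
    (hwoP : ∀ i, WeakOrderOn (P i) Set.univ)
    (hP : ∀ i, StrictPref (P i) (1 / 3) 0 ∧ StrictPref (P i) 0 (1 / 2)) :
    ∀ j, j ≤ k - 1 → 1 ≤ k →
      Relation.ReflTransGen (ISStep (hdgPref (Rset k) (rp P))) (Sing k) (State k j) := by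
  intro j
  induction j with
  | zero => exact fun _ _ => init_chain
  | succ j ih =>
    intro hj hk
    have hjk : j + 1 < k := by omega
    set e : Fin k := ⟨j + 1, hjk⟩ with hedef
    have he : (e : ℕ) = j + 1 := rfl
    have hbase := ih (by omega) hk
    have c1 := Relation.ReflTransGen.tail hbase (gstep1 (e := e) he)
    have c2 := Relation.ReflTransGen.tail c1 (gstep2 hP he)
    have c3 := Relation.ReflTransGen.tail c2 (gstep3 he)
    have c4 := Relation.ReflTransGen.tail c3 (gstep4 hwoP hP he)
    rwa [GS4_eq_State he] at c4

lemma Bset_top (hk : 1 ≤ k) : Bset k (k - 1) = Finset.univ.image blue := by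
  ext a
  simp only [mem_Bset, Finset.mem_image, Finset.mem_univ, true_and]
  constructor
  · rintro ⟨i, hi, rfl⟩
    exact ⟨i, rfl⟩
  · rintro ⟨i, rfl⟩
    exact ⟨i, by omega, rfl⟩

end HDGAux

/-- Given `k ≥ 1` blue agents whose (weak order) ratio preferences satisfy
`1/3 ≻ 0 ≻ 1/2`, there is a hedonic diversity game containing them (together
with finitely many auxiliary agents) such that some finite sequence of IS
deviations starting from the singleton partition ends in a partition containing
the homogeneous coalition of exactly these `k` blue agents. -/
theorem hdg_homogeneous_coalition_lemma (k : ℕ) (hk : 1 ≤ k)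
    (P : Fin k → ℚ → ℚ → Prop)
    (hwoP : ∀ i, WeakOrderOn (P i) Set.univ)
    (hP : ∀ i, StrictPref (P i) (1 / 3) 0 ∧ StrictPref (P i) 0 (1 / 2)) :
    ∃ (n : ℕ) (R : Finset (Fin n)) (rp : Fin n → ℚ → ℚ → Prop)
      (emb : Fin k ↪ Fin n),
      (∀ j, WeakOrderOn (rp j) (RatioSet R.card n)) ∧
      (∀ i : Fin k, emb i ∉ R) ∧
      (∀ i : Fin k, rp (emb i) = P i) ∧
      ∃ (m : ℕ) (seq : ℕ → Fin n → Finset (Fin n)),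
        seq 0 = (fun a => {a}) ∧
        (∀ l < m, ISStep (hdgPref R rp) (seq l) (seq (l + 1))) ∧
        ∃ i : Fin k, seq m (emb i) = Finset.univ.map emb := by
  classical
  set n := Fintype.card (HDGAux.Ag k) with hn
  set e : HDGAux.Ag k ≃ Fin n := Fintype.equivFin _ with he
  refine ⟨n, (HDGAux.Rset k).map e.toEmbedding, fun b => HDGAux.rp P (e.symm b),
    ⟨fun i => e (HDGAux.blue i), ?_⟩, ?_, ?_, ?_⟩
  · intro a b hab
    simp only at hab
    have := e.injective hab
    rwa [HDGAux.blue_inj] at this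
  · intro b
    exact HDGAux.weakOrderOn_mono (HDGAux.weakOrderOn_rp hwoP _)
  · intro i
    simp only [Function.Embedding.coeFn_mk, Finset.mem_map_equiv, Equiv.symm_apply_apply]
    change e.symm (e (HDGAux.blue i)) ∉ HDGAux.Rset k
    rw [Equiv.symm_apply_apply]
    exact HDGAux.blue_not_mem_R
  · constructor
    · intro i
      simp only [Function.Embedding.coeFn_mk, Equiv.symm_apply_apply]
      change HDGAux.rp P (e.symm (e (HDGAux.blue i))) = P i
      rw [Equiv.symm_apply_apply]
      exact HDGAux.rp_blue
    · have hchain := HDGAux.state_chain hwoP hP (k - 1) le_rfl hk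
      have hmap := Relation.ReflTransGen.lift
        (fun π : HDGAux.Ag k → Finset (HDGAux.Ag k) =>
          fun b => (π (e.symm b)).map e.toEmbedding)
        (fun a b h => isStep_map e (HDGAux.Rset k) (HDGAux.rp P) h) _ _ hchain
      have hstart : (fun b => ((HDGAux.Sing k (e.symm b)).map e.toEmbedding : Finset (Fin n)))
          = fun a => {a} := by
        funext b
        rw [HDGAux.Sing_eval, Finset.map_singleton]
        simp
      dsimp only [Function.onFun] at hmap
      beta_reduce at hmap
      rw [hstart] at hmap
      obtain ⟨m, seq, h0, hstep, hm⟩ := chain_to_seq hmap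
      refine ⟨m, seq, h0, hstep, ⟨0, hk⟩, ?_⟩
      rw [hm]
      simp only [Function.Embedding.coeFn_mk, Equiv.symm_apply_apply]
      change Finset.map e.toEmbedding (HDGAux.State k (k - 1) (e.symm (e (HDGAux.blue ⟨0, hk⟩)))) = _
      rw [Equiv.symm_apply_apply]
      rw [HDGAux.State_blue_le (by omega), HDGAux.Bset_top hk]
      ext b
      simp only [Finset.mem_map, Finset.mem_image, Finset.mem_univ, true_and,
        Function.Embedding.coeFn_mk, Equiv.coe_toEmbedding]
      constructor
      · rintro ⟨a, ⟨i, rfl⟩, rfl⟩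
        exact ⟨i, rfl⟩
      · rintro ⟨i, rfl⟩
        exact ⟨HDGAux.blue i, ⟨i, rfl⟩, rfl⟩
end

section
/- There exists a hedonic diversity game in which all agents have naturally single-peaked preferences (with indifferences allowed) that admits an infinite sequence of IS deviations starting from the singleton partition in which every deviation satisfies solitary homogeneity. -/
/-!
The witness has six agents, two of them red, whose utilities are unimodal step functions of
the red ratio, hence single-peaked. Agent `0` leaves the singleton partition by joining the blue
agent `3`, and from there nine IS deviations lead back to the same partition; listing only the
non-singleton coalitions, the cycle is
`{0,3} → {0,2,3} → {0,2,3,4} → {0,2,3,4,5} → {0,2,3,5},{1,4} → {0,1,2,3,5} → {0,1,2,3}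
→ {0,1,3} → {0,1} → {0,3}`. Each deviation joins a mixed coalition or moves to a singleton.
-/

section Decidability

variable {A : Type*} [DecidableEq A]

instance [Fintype A] (π : A → Finset A) : Decidable (IsPartition π) :=
  inferInstanceAs (Decidable (_ ∧ _))

instance {α : Type*} (r : α → α → Prop) [DecidableRel r] (x y : α) :
    Decidable (StrictPref r x y) :=
  inferInstanceAs (Decidable (_ ∧ _))

instance [Fintype A] (wp : A → Finset A → Finset A → Prop) [∀ i, DecidableRel (wp i)]
    (π π' : A → Finset A) (i : A) : Decidable (IsISDeviation wp π π' i) :=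
  inferInstanceAs (Decidable (_ ∧ _))

instance (R C : Finset A) : Decidable (HomogeneousCoalition R C) :=
  inferInstanceAs (Decidable (_ ∨ _))

instance (R : Finset A) (rp : A → ℚ → ℚ → Prop) [∀ i, DecidableRel (rp i)] (i : A) :
    DecidableRel (hdgPref R rp i) :=
  fun _ _ => inferInstanceAs (Decidable (rp i _ _))

instance [Fintype A] (R : Finset A) (rp : A → ℚ → ℚ → Prop) [∀ i, DecidableRel (rp i)]
    (π π' : A → Finset A) : Decidable (ISStepSH R rp π π') :=
  inferInstanceAs (Decidable (_ ∧ _))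

end Decidability

section Utility

variable {α β : Type*}

def prefOfUtility [LE β] (f : α → β) : α → α → Prop := fun x y => f y ≤ f x

instance [LE β] [DecidableLE β] (f : α → β) : DecidableRel (prefOfUtility f) :=
  fun x y => inferInstanceAs (Decidable (f y ≤ f x))

theorem weakOrderOn_prefOfUtility [LinearOrder β] (f : α → β) (S : Set α) :
    WeakOrderOn (prefOfUtility f) S :=
  ⟨fun x _ y _ => le_total (f y) (f x), fun _ _ _ _ _ _ hxy hyz => hyz.trans hxy⟩

theorem singlePeakedOn_prefOfUtility [LinearOrder α] [LinearOrder β] {f : α → β}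
    (hf : ∀ x y z, x ≤ y → y ≤ z → min (f x) (f z) ≤ f y) (S : Set α) :
    SinglePeakedOn (prefOfUtility f) S := by
  intro x _ y _ z _ hbetween hxy
  have hlt : f y < f x := not_le.mp hxy.2
  have hmin : min (f x) (f z) ≤ f y := by
    rcases hbetween with ⟨h₁, h₂⟩ | ⟨h₁, h₂⟩
    · exact hf x y z h₁.le h₂.le
    · exact min_comm (f x) (f z) ▸ hf z y x h₁.le h₂.le
  exact (min_le_iff.mp hmin).resolve_left hlt.not_ge

def threeStep (a b : ℚ) (u v w : ℕ) (x : ℚ) : ℕ :=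
  if x < a then u else if x < b then v else w

theorem threeStep_min_le {a b : ℚ} {u v w : ℕ} (h : min u w ≤ v) {x y z : ℚ}
    (hxy : x ≤ y) (hyz : y ≤ z) :
    min (threeStep a b u v w x) (threeStep a b u v w z) ≤ threeStep a b u v w y := by
  unfold threeStep
  split_ifs <;> first | omega | linarith

end Utility

open Fin.NatCast in
theorem exists_seq_of_cycle {α : Type*} {r : α → α → Prop} {m : ℕ} [NeZero m] {a : α}
    {c : Fin m → α} (h₀ : r a (c 0)) (hc : ∀ k, r (c k) (c (k + 1))) :
    ∃ seq : ℕ → α, seq 0 = a ∧ ∀ k, r (seq k) (seq (k + 1)) := by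
  refine ⟨fun | 0 => a | k + 1 => c (k : Fin m), rfl, fun | 0 => ?_ | k + 1 => ?_⟩
  · simpa using h₀
  · simpa [Nat.cast_succ] using hc (k : Fin m)

/-- Agents in none of the `blocks` are alone; the blocks are meant to be disjoint. -/
def partitionOf {A : Type*} [DecidableEq A] (blocks : List (Finset A)) (a : A) : Finset A :=
  (blocks.find? (a ∈ ·)).getD {a}

namespace Witness

def red : Finset (Fin 6) := {0, 1}

def utility : Fin 6 → ℚ → ℕ :=
  ![threeStep 1 1 1 1 0, threeStep (1/2) (1/2) 1 1 0, threeStep (1/5) (1/2) 1 2 0,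
    threeStep (1/5) (2/3) 1 2 0, threeStep (1/5) (1/2) 0 1 2, threeStep (1/5) (1/4) 1 2 0]

abbrev ratioPref (i : Fin 6) : ℚ → ℚ → Prop := prefOfUtility (utility i)

def cycle : Fin 9 → Fin 6 → Finset (Fin 6) :=
  ![partitionOf [{0, 3}], partitionOf [{0, 2, 3}], partitionOf [{0, 2, 3, 4}],
    partitionOf [{0, 2, 3, 4, 5}], partitionOf [{0, 2, 3, 5}, {1, 4}],
    partitionOf [{0, 1, 2, 3, 5}], partitionOf [{0, 1, 2, 3}], partitionOf [{0, 1, 3}],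
    partitionOf [{0, 1}]]

theorem isStepSH_singletons_cycle_zero : ISStepSH red ratioPref (fun a => {a}) (cycle 0) := by
  decide +kernel

theorem isStepSH_cycle (k : Fin 9) : ISStepSH red ratioPref (cycle k) (cycle (k + 1)) := by
  revert k; decide +kernel

theorem singlePeakedOn_ratioPref (i : Fin 6) (S : Set ℚ) : SinglePeakedOn (ratioPref i) S := by
  refine singlePeakedOn_prefOfUtility (fun x y z hxy hyz => ?_) S
  fin_cases i <;> exact threeStep_min_le (by norm_num) hxy hyz

end Witness

/-- There exists a hedonic diversity game with naturally single-peaked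
preferences (indifferences allowed) that admits an infinite sequence of IS
deviations starting from the singleton partition in which every deviation
satisfies solitary homogeneity. -/
theorem hdg_natSP_cycle_from_singletons_SH :
    ∃ (n : ℕ) (R : Finset (Fin n)) (rp : Fin n → ℚ → ℚ → Prop),
      (∀ i, WeakOrderOn (rp i) (RatioSet R.card n)) ∧
      (∀ i, SinglePeakedOn (rp i) (RatioSet R.card n)) ∧
      ∃ seq : ℕ → Fin n → Finset (Fin n),
        seq 0 = (fun a => {a}) ∧
        ∀ k, ISStepSH R rp (seq k) (seq (k + 1)) :=
  ⟨6, Witness.red, Witness.ratioPref, fun _ => weakOrderOn_prefOfUtility _ _,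
    fun i => Witness.singlePeakedOn_ratioPref i _,
    exists_seq_of_cycle Witness.isStepSH_singletons_cycle_zero Witness.isStepSH_cycle⟩
end

section
/- Consider a hedonic diversity game in which all agents have strict and naturally single-peaked preferences, and a sequence of IS deviations π_0, π_1, …, π_K starting from the singleton partition π_0 in which every deviation satisfies solitary homogeneity. For an agent i, let the peak p_i denote the unique ≿_i-maximal ratio. Then for every k: every red agent r with p_r ≥ 1/2 satisfies |R ∩ π_k(r)|/|π_k(r)| ≥ 1/2, and every blue agent b with p_b ≤ 1/2 satisfies |R ∩ π_k(b)|/|π_k(b)| ≤ 1/2. -/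
/-!
Every coalition reached by the dynamics is *good* (`GoodCoalition`): if it has at least two
members, one of the two colours is represented by a single lone agent, and if it has `s ≥ 3`
members, that lone agent weakly prefers its red ratio (`1/s` for a lone red agent, `1 - 1/s`
for a lone blue one) to the ratio after one agent of the other colour has left (`1/(s-1)`,
resp. `1 - 1/(s-1)`). By single-peakedness, a lone red agent of a coalition of size `s ≥ 3` then
strictly prefers its coalition to every ratio `≥ 1/(s-1)`, in particular to every ratio `≥ 1/2`,
and symmetrically for blue agents.

When agent `i` joins a coalition `C`, solitary homogeneity handles `|C| ≤ 1`; if `C` has a lone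
agent of the other colour, its consent is exactly the new lone-agent preference, and if `C` has
a lone agent of `i`'s colour, that agent would have to consent to a ratio it strictly dislikes.
The new coalition of a red `i` has ratio `≥ 1/2` (`≤ 1/2` for a blue `i`), so the lone agent of
a coalition of size `≥ 3` never deviates; when another agent leaves, single-peakedness moves the
lone agent's preference one step along. Finally, a red agent with peak `≥ 1/2` cannot be the
lone red agent of a coalition of size `≥ 3`, and in every other good coalition containing it the
red ratio is at least `1/2`.
-/

structure IsStrictSinglePeakedOn (r : ℚ → ℚ → Prop) (S : Set ℚ) : Prop where
  weakOrder : WeakOrderOn r S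
  antisymm : StrictPrefsOn r S
  singlePeaked : SinglePeakedOn r S

section Preference

variable {r : ℚ → ℚ → Prop} {S : Set ℚ} {x y z : ℚ}

theorem StrictPrefsOn.strictPref_of_ne (h : StrictPrefsOn r S) (hx : x ∈ S) (hy : y ∈ S)
    (hxy : r x y) (hne : x ≠ y) : StrictPref r x y :=
  ⟨hxy, fun hyx => hne (h x hx y hy hxy hyx)⟩

namespace IsStrictSinglePeakedOn

theorem pref_of_between (h : IsStrictSinglePeakedOn r S) (hx : x ∈ S) (hy : y ∈ S) (hz : z ∈ S)
    (hbtw : (x < y ∧ y < z) ∨ (z < y ∧ y < x)) (hxy : r x y) : r y z :=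
  h.singlePeaked x hx y hy z hz hbtw <| h.antisymm.strictPref_of_ne hx hy hxy <| by
    rcases hbtw with ⟨hlt, -⟩ | ⟨-, hlt⟩
    exacts [hlt.ne, hlt.ne']

theorem strictPref_of_between (h : IsStrictSinglePeakedOn r S) (hx : x ∈ S) (hy : y ∈ S)
    (hz : z ∈ S) (hbtw : (x < y ∧ y ≤ z) ∨ (z ≤ y ∧ y < x)) (hxy : r x y) :
    StrictPref r x z := by
  refine h.antisymm.strictPref_of_ne hx hz ?_ (by rcases hbtw with ⟨h₁, h₂⟩ | ⟨h₁, h₂⟩ <;> grind)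
  rcases eq_or_ne y z with rfl | hyz
  · exact hxy
  refine h.weakOrder.2 x hx y hy z hz hxy (h.pref_of_between hx hy hz ?_ hxy)
  rcases hbtw with ⟨h₁, h₂⟩ | ⟨h₁, h₂⟩
  exacts [.inl ⟨h₁, lt_of_le_of_ne h₂ hyz⟩, .inr ⟨lt_of_le_of_ne h₁ hyz.symm, h₂⟩]

end IsStrictSinglePeakedOn

end Preference

section Ratio

theorem one_div_natCast_lt_one_div {a b : ℕ} (ha : 0 < a) (h : a < b) : (1 : ℚ) / b < 1 / a :=
  one_div_lt_one_div_of_lt (by exact_mod_cast ha) (by exact_mod_cast h)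

theorem one_div_pred_le_two_div_succ {s : ℕ} (hs : 3 ≤ s) :
    (1 : ℚ) / (s - 1 : ℕ) ≤ 2 / (s + 1 : ℕ) := by
  have : (3 : ℚ) ≤ s := by exact_mod_cast hs
  rw [div_le_div_iff₀ (by norm_num; omega) (by positivity)]
  push_cast [Nat.cast_sub (by omega : 1 ≤ s)]
  linarith

variable {m n s : ℕ}

theorem one_div_mem_ratioSet (hm : 1 ≤ m) (hs : 1 ≤ s) (hsn : s ≤ n) :
    (1 : ℚ) / s ∈ RatioSet m n :=
  ⟨1, s, hm, hs, hsn, by rw [Nat.cast_one]⟩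

theorem one_sub_one_div_mem_ratioSet (hs : 1 ≤ s) (hsn : s ≤ n) (hm : s - 1 ≤ m) :
    1 - (1 : ℚ) / s ∈ RatioSet m n := by
  refine ⟨s - 1, s, hm, hs, hsn, ?_⟩
  have hpos : (s : ℚ) ≠ 0 := by positivity
  rw [Nat.cast_sub hs, Nat.cast_one, sub_div, div_self hpos]

variable {r : ℚ → ℚ → Prop}

theorem IsStrictSinglePeakedOn.pref_one_div_pred (hr : IsStrictSinglePeakedOn r (RatioSet m n))
    (hm : 1 ≤ m) (hs : 4 ≤ s) (hsn : s ≤ n) (h : r (1 / s) (1 / (s - 1 : ℕ))) :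
    r (1 / (s - 1 : ℕ)) (1 / (s - 1 - 1 : ℕ)) :=
  hr.pref_of_between (one_div_mem_ratioSet hm (by omega) hsn)
    (one_div_mem_ratioSet hm (by omega) (by omega)) (one_div_mem_ratioSet hm (by omega) (by omega))
    (.inl ⟨one_div_natCast_lt_one_div (by omega) (by omega),
      one_div_natCast_lt_one_div (by omega) (by omega)⟩) h

theorem IsStrictSinglePeakedOn.pref_one_sub_one_div_pred
    (hr : IsStrictSinglePeakedOn r (RatioSet m n)) (hm : s - 1 ≤ m) (hs : 4 ≤ s) (hsn : s ≤ n)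
    (h : r (1 - 1 / s) (1 - 1 / (s - 1 : ℕ))) :
    r (1 - 1 / (s - 1 : ℕ)) (1 - 1 / (s - 1 - 1 : ℕ)) :=
  hr.pref_of_between (one_sub_one_div_mem_ratioSet (by omega) hsn hm)
    (one_sub_one_div_mem_ratioSet (by omega) (by omega) (by omega))
    (one_sub_one_div_mem_ratioSet (by omega) (by omega) (by omega))
    (.inr ⟨sub_lt_sub_left (one_div_natCast_lt_one_div (by omega) (by omega)) 1,
      sub_lt_sub_left (one_div_natCast_lt_one_div (by omega) (by omega)) 1⟩) h

variable {A : Type} [DecidableEq A] {R D : Finset A} {d e : A}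

theorem card_inter_add_card_sdiff_eq_card (R D : Finset A) :
    (R ∩ D).card + (D \ R).card = D.card := by
  rw [Finset.inter_comm, Finset.card_inter_add_card_sdiff]

theorem card_eq_two_of_inter_eq_singleton_of_sdiff_eq_singleton (hd : R ∩ D = {d})
    (he : D \ R = {e}) : D.card = 2 := by
  rw [← card_inter_add_card_sdiff_eq_card R D, hd, he, Finset.card_singleton,
    Finset.card_singleton]

theorem one_le_card_of_inter_eq_singleton (hd : R ∩ D = {d}) : 1 ≤ R.card :=
  Finset.card_pos.2 ⟨d, (Finset.mem_inter.1 (hd ▸ Finset.mem_singleton_self d)).1⟩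

theorem card_sub_one_le_of_sdiff_eq_singleton (hd : D \ R = {d}) : D.card - 1 ≤ R.card := by
  have hcard := card_inter_add_card_sdiff_eq_card R D
  rw [hd, Finset.card_singleton] at hcard
  have := Finset.card_le_card (Finset.inter_subset_left (s₁ := R) (s₂ := D))
  omega

theorem redRatio_eq_one_sub (hD : D.Nonempty) :
    redRatio R D = 1 - ((D \ R).card : ℚ) / D.card := by
  have hpos : (0 : ℚ) < D.card := by exact_mod_cast hD.card_pos
  rw [redRatio, eq_sub_iff_add_eq, ← add_div, div_eq_one_iff_eq hpos.ne']
  exact_mod_cast card_inter_add_card_sdiff_eq_card R D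

theorem redRatio_of_inter_eq_singleton (h : R ∩ D = {d}) : redRatio R D = 1 / D.card := by
  rw [redRatio, h, Finset.card_singleton, Nat.cast_one]

theorem redRatio_of_sdiff_eq_singleton (h : D \ R = {d}) : redRatio R D = 1 - 1 / D.card := by
  rw [redRatio_eq_one_sub ⟨d, Finset.sdiff_subset (h ▸ Finset.mem_singleton_self d)⟩, h,
    Finset.card_singleton, Nat.cast_one]

theorem redRatio_mem_ratioSet [Fintype A] (hD : D.Nonempty) :
    redRatio R D ∈ RatioSet R.card (Fintype.card A) :=
  ⟨(R ∩ D).card, D.card, Finset.card_le_card Finset.inter_subset_left, hD.card_pos,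
    Finset.card_le_univ D, rfl⟩

end Ratio

section Game

variable {A : Type} [DecidableEq A] {R : Finset A} {rp : A → ℚ → ℚ → Prop}

structure GoodCoalition (R : Finset A) (rp : A → ℚ → ℚ → Prop) (D : Finset A) : Prop where
  mixed : 2 ≤ D.card → (∃ d, R ∩ D = {d}) ∨ ∃ d, D \ R = {d}
  redLock : ∀ d, R ∩ D = {d} → 3 ≤ D.card → rp d (1 / D.card) (1 / (D.card - 1 : ℕ))
  blueLock : ∀ d, D \ R = {d} → 3 ≤ D.card →
    rp d (1 - 1 / D.card) (1 - 1 / (D.card - 1 : ℕ))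

namespace GoodCoalition

variable {D : Finset A} {a : A}

theorem of_card_le_two (h2 : D.card ≤ 2) (hmix : D.card = 2 → ¬ HomogeneousCoalition R D) :
    GoodCoalition R rp D where
  mixed h := by
    have hred : (R ∩ D).Nonempty := by
      by_contra hR
      refine hmix (by omega) (.inr fun a ha haR => hR ⟨a, Finset.mem_inter.2 ⟨haR, ha⟩⟩)
    have hblue : (D \ R).Nonempty := by
      by_contra hB
      refine hmix (by omega) (.inl fun a ha => ?_)
      by_contra haR
      exact hB ⟨a, Finset.mem_sdiff.2 ⟨ha, haR⟩⟩
    have := card_inter_add_card_sdiff_eq_card R D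
    have := hred.card_pos
    have := hblue.card_pos
    exact .inl (Finset.card_eq_one.1 (by omega))
  redLock _ _ h := by omega
  blueLock _ _ h := by omega

theorem half_le_redRatio (hD : GoodCoalition R rp D) (ha : a ∈ R ∩ D)
    (hlone : R ∩ D = {a} → D.card ≤ 2) : 1 / 2 ≤ redRatio R D := by
  by_cases hsingle : R ∩ D = {a}
  · rw [redRatio_of_inter_eq_singleton hsingle]
    have : 0 < D.card := Finset.card_pos.2 ⟨a, (Finset.mem_inter.1 ha).2⟩
    exact one_div_le_one_div_of_le (by exact_mod_cast this) (by exact_mod_cast hlone hsingle)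
  have h2 : 2 ≤ (R ∩ D).card := by
    by_contra! h
    exact hsingle (Finset.eq_singleton_iff_unique_mem.2
      ⟨ha, fun x hx => Finset.card_le_one.1 (by omega) x hx a ha⟩)
  have hD2 : 2 ≤ D.card := h2.trans (Finset.card_le_card Finset.inter_subset_right)
  rcases hD.mixed hD2 with ⟨b, hb⟩ | ⟨b, hb⟩
  · rw [hb, Finset.card_singleton] at h2
    omega
  · rw [redRatio_of_sdiff_eq_singleton hb]
    have := one_div_le_one_div_of_le (by norm_num) (by exact_mod_cast hD2 : (2 : ℚ) ≤ D.card)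
    linarith

theorem redRatio_le_half (hD : GoodCoalition R rp D) (ha : a ∈ D \ R)
    (hlone : D \ R = {a} → D.card ≤ 2) : redRatio R D ≤ 1 / 2 := by
  by_cases hsingle : D \ R = {a}
  · rw [redRatio_of_sdiff_eq_singleton hsingle]
    have : 0 < D.card := Finset.card_pos.2 ⟨a, (Finset.mem_sdiff.1 ha).1⟩
    have := one_div_le_one_div_of_le (by exact_mod_cast this)
      (by exact_mod_cast hlone hsingle : (D.card : ℚ) ≤ 2)
    linarith
  have h2 : 2 ≤ (D \ R).card := by
    by_contra! h
    exact hsingle (Finset.eq_singleton_iff_unique_mem.2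
      ⟨ha, fun x hx => Finset.card_le_one.1 (by omega) x hx a ha⟩)
  have hD2 : 2 ≤ D.card := h2.trans (Finset.card_le_card Finset.sdiff_subset)
  rcases hD.mixed hD2 with ⟨b, hb⟩ | ⟨b, hb⟩
  · rw [redRatio_of_inter_eq_singleton hb]
    exact one_div_le_one_div_of_le (by norm_num) (by exact_mod_cast hD2)
  · rw [hb, Finset.card_singleton] at h2
    omega

variable [Fintype A] {C O : Finset A} {d i : A} {z : ℚ}

theorem strictPref_of_inter_eq_singleton
    (hrp : IsStrictSinglePeakedOn (rp d) (RatioSet R.card (Fintype.card A)))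
    (hD : GoodCoalition R rp D) (hd : R ∩ D = {d}) (h3 : 3 ≤ D.card)
    (hz : z ∈ RatioSet R.card (Fintype.card A)) (hzle : 1 / (D.card - 1 : ℕ) ≤ z) :
    StrictPref (rp d) (redRatio R D) z := by
  have hm := one_le_card_of_inter_eq_singleton hd
  have hn : D.card ≤ Fintype.card A := Finset.card_le_univ D
  rw [redRatio_of_inter_eq_singleton hd]
  exact hrp.strictPref_of_between (one_div_mem_ratioSet hm (by omega) hn)
    (one_div_mem_ratioSet hm (by omega) (by omega)) hz
    (.inl ⟨one_div_natCast_lt_one_div (by omega) (by omega), hzle⟩) (hD.redLock d hd h3)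

theorem strictPref_of_sdiff_eq_singleton
    (hrp : IsStrictSinglePeakedOn (rp d) (RatioSet R.card (Fintype.card A)))
    (hD : GoodCoalition R rp D) (hd : D \ R = {d}) (h3 : 3 ≤ D.card)
    (hz : z ∈ RatioSet R.card (Fintype.card A)) (hzle : z ≤ 1 - 1 / (D.card - 1 : ℕ)) :
    StrictPref (rp d) (redRatio R D) z := by
  have hm := card_sub_one_le_of_sdiff_eq_singleton hd
  have hn : D.card ≤ Fintype.card A := Finset.card_le_univ D
  rw [redRatio_of_sdiff_eq_singleton hd]
  exact hrp.strictPref_of_between (one_sub_one_div_mem_ratioSet (by omega) hn hm)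
    (one_sub_one_div_mem_ratioSet (by omega) (by omega) (by omega)) hz
    (.inr ⟨hzle, sub_lt_sub_left (one_div_natCast_lt_one_div (by omega) (by omega)) 1⟩)
    (hD.blueLock d hd h3)

theorem strictPref_of_inter_eq_singleton_of_half_le
    (hrp : IsStrictSinglePeakedOn (rp a) (RatioSet R.card (Fintype.card A)))
    (hD : GoodCoalition R rp D) (ha : R ∩ D = {a}) (h3 : 3 ≤ D.card)
    (hz : z ∈ RatioSet R.card (Fintype.card A)) (hz2 : 1 / 2 ≤ z) :
    StrictPref (rp a) (redRatio R D) z :=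
  hD.strictPref_of_inter_eq_singleton hrp ha h3 hz <|
    (one_div_le_one_div_of_le two_pos (by exact_mod_cast (by omega : 2 ≤ D.card - 1))).trans hz2

theorem strictPref_of_sdiff_eq_singleton_of_le_half
    (hrp : IsStrictSinglePeakedOn (rp a) (RatioSet R.card (Fintype.card A)))
    (hD : GoodCoalition R rp D) (ha : D \ R = {a}) (h3 : 3 ≤ D.card)
    (hz : z ∈ RatioSet R.card (Fintype.card A)) (hz2 : z ≤ 1 / 2) :
    StrictPref (rp a) (redRatio R D) z :=
  hD.strictPref_of_sdiff_eq_singleton hrp ha h3 hz <| by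
    linarith [one_div_le_one_div_of_le two_pos (by exact_mod_cast (by omega : 2 ≤ D.card - 1) :
      (2 : ℚ) ≤ (D.card - 1 : ℕ))]

theorem half_le_redRatio_of_half_le_peak
    (hrp : IsStrictSinglePeakedOn (rp a) (RatioSet R.card (Fintype.card A))) {p : ℚ}
    (hpeak : p ∈ RatioSet R.card (Fintype.card A) ∧
      ∀ x ∈ RatioSet R.card (Fintype.card A), rp a p x)
    (hp : 1 / 2 ≤ p) (hD : GoodCoalition R rp D) (ha : a ∈ R ∩ D) : 1 / 2 ≤ redRatio R D :=
  hD.half_le_redRatio ha fun hsingle => by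
    by_contra! h3
    exact (hD.strictPref_of_inter_eq_singleton_of_half_le hrp hsingle h3 hpeak.1 hp).2
      (hpeak.2 _ (redRatio_mem_ratioSet ⟨a, (Finset.mem_inter.1 ha).2⟩))

theorem redRatio_le_half_of_peak_le_half
    (hrp : IsStrictSinglePeakedOn (rp a) (RatioSet R.card (Fintype.card A))) {p : ℚ}
    (hpeak : p ∈ RatioSet R.card (Fintype.card A) ∧
      ∀ x ∈ RatioSet R.card (Fintype.card A), rp a p x)
    (hp : p ≤ 1 / 2) (hD : GoodCoalition R rp D) (ha : a ∈ D \ R) : redRatio R D ≤ 1 / 2 :=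
  hD.redRatio_le_half ha fun hsingle => by
    by_contra! h3
    exact (hD.strictPref_of_sdiff_eq_singleton_of_le_half hrp hsingle h3 hpeak.1 hp).2
      (hpeak.2 _ (redRatio_mem_ratioSet ⟨a, (Finset.mem_sdiff.1 ha).1⟩))

theorem erase (hrp : ∀ j, IsStrictSinglePeakedOn (rp j) (RatioSet R.card (Fintype.card A)))
    (hO : GoodCoalition R rp O) (hi : i ∈ O)
    (hlone : ∀ d, (R ∩ O = {d} ∨ O \ R = {d}) → 3 ≤ O.card → i ≠ d) :
    GoodCoalition R rp (O.erase i) := by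
  have hcard : (O.erase i).card = O.card - 1 := Finset.card_erase_of_mem hi
  have hn : O.card ≤ Fintype.card A := Finset.card_le_univ O
  rcases Nat.lt_or_ge O.card 3 with hsmall | h3
  · exact of_card_le_two (by omega) (fun h => by omega)
  rcases hO.mixed (by omega) with ⟨d, hd⟩ | ⟨d, hd⟩
  · have hd' : R ∩ O.erase i = {d} := by
      rw [Finset.inter_erase, hd,
        Finset.erase_eq_of_notMem (Finset.notMem_singleton.2 (hlone d (.inl hd) h3))]
    refine ⟨fun _ => .inl ⟨d, hd'⟩, fun e he h3' => ?_, fun e he h3' => ?_⟩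
    · obtain rfl : d = e := Finset.singleton_inj.1 (hd'.symm.trans he)
      rw [hcard]
      exact (hrp d).pref_one_div_pred (one_le_card_of_inter_eq_singleton hd) (by omega) hn
        (hO.redLock d hd h3)
    · have := card_eq_two_of_inter_eq_singleton_of_sdiff_eq_singleton hd' he
      omega
  · have hd' : O.erase i \ R = {d} := by
      rw [Finset.erase_sdiff_comm, hd,
        Finset.erase_eq_of_notMem (Finset.notMem_singleton.2 (hlone d (.inr hd) h3))]
    refine ⟨fun _ => .inr ⟨d, hd'⟩, fun e he h3' => ?_, fun e he h3' => ?_⟩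
    · have := card_eq_two_of_inter_eq_singleton_of_sdiff_eq_singleton he hd'
      omega
    · obtain rfl : d = e := Finset.singleton_inj.1 (hd'.symm.trans he)
      rw [hcard]
      exact (hrp d).pref_one_sub_one_div_pred (card_sub_one_le_of_sdiff_eq_singleton hd)
        (by omega) hn (hO.blueLock d hd h3)

theorem not_pref_insert_of_inter_eq_singleton
    (hrp : IsStrictSinglePeakedOn (rp d) (RatioSet R.card (Fintype.card A)))
    (hC : GoodCoalition R rp C) (hd : R ∩ C = {d}) (h3 : 3 ≤ C.card) (hiR : i ∈ R)
    (hiC : i ∉ C) : ¬ rp d (redRatio R (insert i C)) (redRatio R C) := by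
  have hratio : redRatio R (insert i C) = 2 / (C.card + 1 : ℕ) := by
    rw [redRatio, Finset.inter_insert_of_mem hiR,
      Finset.card_insert_of_notMem fun h => hiC (Finset.mem_inter.1 h).2, hd,
      Finset.card_singleton, Finset.card_insert_of_notMem hiC]
    norm_num
  refine (hC.strictPref_of_inter_eq_singleton hrp hd h3
    (redRatio_mem_ratioSet (Finset.insert_nonempty i C)) ?_).2
  rw [hratio]
  exact one_div_pred_le_two_div_succ h3

theorem not_pref_insert_of_sdiff_eq_singleton
    (hrp : IsStrictSinglePeakedOn (rp d) (RatioSet R.card (Fintype.card A)))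
    (hC : GoodCoalition R rp C) (hd : C \ R = {d}) (h3 : 3 ≤ C.card) (hiR : i ∉ R)
    (hiC : i ∉ C) : ¬ rp d (redRatio R (insert i C)) (redRatio R C) := by
  have hratio : redRatio R (insert i C) = 1 - 2 / (C.card + 1 : ℕ) := by
    rw [redRatio_eq_one_sub (Finset.insert_nonempty i C), Finset.insert_sdiff_of_notMem C hiR,
      Finset.card_insert_of_notMem fun h => hiC (Finset.mem_sdiff.1 h).1, hd,
      Finset.card_singleton, Finset.card_insert_of_notMem hiC]
    norm_num
  refine (hC.strictPref_of_sdiff_eq_singleton hrp hd h3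
    (redRatio_mem_ratioSet (Finset.insert_nonempty i C)) ?_).2
  rw [hratio]
  linarith [one_div_pred_le_two_div_succ h3]

theorem insert_of_mem
    (hrp : ∀ j, IsStrictSinglePeakedOn (rp j) (RatioSet R.card (Fintype.card A)))
    (hC : GoodCoalition R rp C) (hiR : i ∈ R) (hiC : i ∉ C)
    (hcons : ∀ j ∈ C, rp j (redRatio R (insert i C)) (redRatio R C))
    (hSH : HomogeneousCoalition R (insert i C) → (insert i C).card = 1) :
    GoodCoalition R rp (insert i C) ∧ 1 / 2 ≤ redRatio R (insert i C) := by
  have hcard : (insert i C).card = C.card + 1 := Finset.card_insert_of_notMem hiC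
  have hred : R ∩ insert i C = insert i (R ∩ C) := Finset.inter_insert_of_mem hiR
  have hiRC : i ∉ R ∩ C := fun h => hiC (Finset.mem_inter.1 h).2
  rcases Nat.lt_or_ge C.card 2 with hsmall | h2
  · have hN : GoodCoalition R rp (insert i C) :=
      of_card_le_two (by omega) fun h hom => by have := hSH hom; omega
    exact ⟨hN, hN.half_le_redRatio (Finset.mem_inter.2 ⟨hiR, Finset.mem_insert_self i C⟩)
      fun _ => by omega⟩
  by_cases hb : ∃ d, C \ R = {d}
  · obtain ⟨d, hd⟩ := hb
    have hNd : insert i C \ R = {d} := (Finset.insert_sdiff_of_mem C hiR).trans hd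
    have hred2 : 2 ≤ (R ∩ insert i C).card := by
      have := card_inter_add_card_sdiff_eq_card R C
      rw [hred, Finset.card_insert_of_notMem hiRC]
      rw [hd, Finset.card_singleton] at this
      omega
    refine ⟨⟨fun _ => .inr ⟨d, hNd⟩, fun e he _ => ?_, fun e he _ => ?_⟩, ?_⟩
    · rw [he, Finset.card_singleton] at hred2
      omega
    · obtain rfl : d = e := Finset.singleton_inj.1 (hNd.symm.trans he)
      rw [hcard, Nat.add_sub_cancel]
      have := hcons d (Finset.sdiff_subset (hd ▸ Finset.mem_singleton_self d))
      rwa [redRatio_of_sdiff_eq_singleton hNd, redRatio_of_sdiff_eq_singleton hd, hcard] at this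
    · rw [redRatio_of_sdiff_eq_singleton hNd]
      have := one_div_le_one_div_of_le (by norm_num)
        (by rw [hcard]; exact_mod_cast (by omega : 2 ≤ C.card + 1) : (2 : ℚ) ≤ (insert i C).card)
      linarith
  obtain ⟨d, hd⟩ := (hC.mixed h2).resolve_right hb
  have h3 : 3 ≤ C.card := by
    have := card_inter_add_card_sdiff_eq_card R C
    rw [hd, Finset.card_singleton] at this
    have : (C \ R).card ≠ 1 := fun h => hb (Finset.card_eq_one.1 h)
    omega
  exact absurd (hcons d (Finset.mem_inter.1 (hd ▸ Finset.mem_singleton_self d)).2)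
    (hC.not_pref_insert_of_inter_eq_singleton (hrp d) hd h3 hiR hiC)

theorem insert_of_notMem
    (hrp : ∀ j, IsStrictSinglePeakedOn (rp j) (RatioSet R.card (Fintype.card A)))
    (hC : GoodCoalition R rp C) (hiR : i ∉ R) (hiC : i ∉ C)
    (hcons : ∀ j ∈ C, rp j (redRatio R (insert i C)) (redRatio R C))
    (hSH : HomogeneousCoalition R (insert i C) → (insert i C).card = 1) :
    GoodCoalition R rp (insert i C) ∧ redRatio R (insert i C) ≤ 1 / 2 := by
  have hcard : (insert i C).card = C.card + 1 := Finset.card_insert_of_notMem hiC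
  have hblue : insert i C \ R = insert i (C \ R) := Finset.insert_sdiff_of_notMem C hiR
  have hiCR : i ∉ C \ R := fun h => hiC (Finset.mem_sdiff.1 h).1
  rcases Nat.lt_or_ge C.card 2 with hsmall | h2
  · have hN : GoodCoalition R rp (insert i C) :=
      of_card_le_two (by omega) fun h hom => by have := hSH hom; omega
    exact ⟨hN, hN.redRatio_le_half (Finset.mem_sdiff.2 ⟨Finset.mem_insert_self i C, hiR⟩)
      fun _ => by omega⟩
  by_cases hr : ∃ d, R ∩ C = {d}
  · obtain ⟨d, hd⟩ := hr
    have hNd : R ∩ insert i C = {d} := (Finset.inter_insert_of_notMem hiR).trans hd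
    have hblue2 : 2 ≤ (insert i C \ R).card := by
      have := card_inter_add_card_sdiff_eq_card R C
      rw [hblue, Finset.card_insert_of_notMem hiCR]
      rw [hd, Finset.card_singleton] at this
      omega
    refine ⟨⟨fun _ => .inl ⟨d, hNd⟩, fun e he _ => ?_, fun e he _ => ?_⟩, ?_⟩
    · obtain rfl : d = e := Finset.singleton_inj.1 (hNd.symm.trans he)
      rw [hcard, Nat.add_sub_cancel]
      have := hcons d (Finset.mem_inter.1 (hd ▸ Finset.mem_singleton_self d)).2
      rwa [redRatio_of_inter_eq_singleton hNd, redRatio_of_inter_eq_singleton hd, hcard] at this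
    · rw [he, Finset.card_singleton] at hblue2
      omega
    · rw [redRatio_of_inter_eq_singleton hNd, hcard]
      exact one_div_le_one_div_of_le (by norm_num) (by exact_mod_cast (by omega : 2 ≤ C.card + 1))
  obtain ⟨d, hd⟩ := (hC.mixed h2).resolve_left hr
  have h3 : 3 ≤ C.card := by
    have := card_inter_add_card_sdiff_eq_card R C
    rw [hd, Finset.card_singleton] at this
    have : (R ∩ C).card ≠ 1 := fun h => hr (Finset.card_eq_one.1 h)
    omega
  exact absurd (hcons d (Finset.sdiff_subset (hd ▸ Finset.mem_singleton_self d)))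
    (hC.not_pref_insert_of_sdiff_eq_singleton (hrp d) hd h3 hiR hiC)

theorem insert
    (hrp : ∀ j, IsStrictSinglePeakedOn (rp j) (RatioSet R.card (Fintype.card A)))
    (hC : GoodCoalition R rp C) (hiC : i ∉ C)
    (hcons : ∀ j ∈ C, rp j (redRatio R (insert i C)) (redRatio R C))
    (hSH : HomogeneousCoalition R (insert i C) → (insert i C).card = 1) :
    GoodCoalition R rp (insert i C) ∧ (i ∈ R → 1 / 2 ≤ redRatio R (insert i C)) ∧
      (i ∉ R → redRatio R (insert i C) ≤ 1 / 2) := by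
  by_cases hiR : i ∈ R
  · obtain ⟨hgood, hratio⟩ := hC.insert_of_mem hrp hiR hiC hcons hSH
    exact ⟨hgood, fun _ => hratio, absurd hiR⟩
  · obtain ⟨hgood, hratio⟩ := hC.insert_of_notMem hrp hiR hiC hcons hSH
    exact ⟨hgood, fun h => absurd h hiR, fun _ => hratio⟩

theorem erase_of_not_pref
    (hrp : ∀ j, IsStrictSinglePeakedOn (rp j) (RatioSet R.card (Fintype.card A)))
    (hO : GoodCoalition R rp O) (hi : i ∈ O) (hz : z ∈ RatioSet R.card (Fintype.card A))
    (hzR : i ∈ R → 1 / 2 ≤ z) (hzB : i ∉ R → z ≤ 1 / 2) (hpref : ¬ rp i (redRatio R O) z) :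
    GoodCoalition R rp (O.erase i) := by
  refine hO.erase hrp hi fun d hd h3 => ?_
  rintro rfl
  rcases hd with hd | hd
  · exact hpref (hO.strictPref_of_inter_eq_singleton_of_half_le (hrp i) hd h3 hz
      (hzR (Finset.mem_inter.1 (hd ▸ Finset.mem_singleton_self i)).1)).1
  · exact hpref (hO.strictPref_of_sdiff_eq_singleton_of_le_half (hrp i) hd h3 hz
      (hzB (Finset.mem_sdiff.1 (hd ▸ Finset.mem_singleton_self i)).2)).1

end GoodCoalition

end Game

section Deviation

variable {A : Type} [DecidableEq A] {wp : A → Finset A → Finset A → Prop} {π π' : A → Finset A}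
  {i j : A}

theorem isPartition_singleton : IsPartition (fun a : A => ({a} : Finset A)) :=
  ⟨Finset.mem_singleton_self, fun _ _ h => by rw [Finset.mem_singleton.1 h]⟩

namespace IsISDeviation

theorem eq_erase_of_mem_erase (hdev : IsISDeviation wp π π' i) (hπ : IsPartition π)
    (hπ' : IsPartition π') (hj : j ∈ (π' i).erase i) : π j = (π' i).erase i := by
  obtain ⟨hji, hjN⟩ := Finset.mem_erase.1 hj
  have he : (π' i).erase i = (π j).erase i := by rw [← hπ'.2 j i hjN]; exact hdev.2.1 j hji
  have hiπj : i ∉ π j := fun hij => hdev.1 <| by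
    rw [← Finset.insert_erase (hπ'.1 i), he, Finset.insert_erase hij, hπ.2 i j hij]
  rw [he, Finset.erase_eq_of_notMem hiπj]

theorem eq_erase_of_mem (hdev : IsISDeviation wp π π' i) (hπ : IsPartition π)
    (hπ' : IsPartition π') (hj : j ∈ π i) (hji : j ≠ i) : π' j = (π i).erase i := by
  have hiπ'j : i ∉ π' j := fun hij => by
    have hjC : j ∈ (π' i).erase i := Finset.mem_erase.2 ⟨hji, hπ'.2 i j hij ▸ hπ'.1 j⟩
    have := hdev.eq_erase_of_mem_erase hπ hπ' hjC
    rw [hπ.2 j i hj] at this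
    exact Finset.notMem_erase i _ (this ▸ hπ.1 i)
  rw [← Finset.erase_eq_of_notMem hiπ'j, hdev.2.1 j hji, hπ.2 j i hj]

theorem eq_of_notMem (hdev : IsISDeviation wp π π' i) (hπ : IsPartition π)
    (hπ' : IsPartition π') (hjN : j ∉ π' i) (hjO : j ∉ π i) : π' j = π j := by
  have hji : j ≠ i := by rintro rfl; exact hjN (hπ'.1 j)
  have h₁ : i ∉ π j := fun h => hjO (hπ.2 i j h ▸ hπ.1 j)
  have h₂ : i ∉ π' j := fun h => hjN (hπ'.2 i j h ▸ hπ'.1 j)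
  rw [← Finset.erase_eq_of_notMem h₁, ← Finset.erase_eq_of_notMem h₂, hdev.2.1 j hji]

end IsISDeviation

end Deviation

theorem ISStepSH.goodCoalition {A : Type} [Fintype A] [DecidableEq A] {R : Finset A}
    {rp : A → ℚ → ℚ → Prop}
    (hrp : ∀ j, IsStrictSinglePeakedOn (rp j) (RatioSet R.card (Fintype.card A)))
    {π π' : A → Finset A} (h : ISStepSH R rp π π') (hgood : ∀ a, GoodCoalition R rp (π a))
    (a : A) : GoodCoalition R rp (π' a) := by
  obtain ⟨hπ, hπ', i, hdev, hSH⟩ := h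
  set C := (π' i).erase i
  have hN : π' i = insert i C := (Finset.insert_erase (hπ'.1 i)).symm
  have hiC : i ∉ C := Finset.notMem_erase i _
  have hπC : ∀ j ∈ C, π j = C := fun j hj => hdev.eq_erase_of_mem_erase hπ hπ' hj
  have hC : GoodCoalition R rp C := by
    rcases C.eq_empty_or_nonempty with hC | ⟨j, hj⟩
    · rw [hC]
      exact .of_card_le_two (by simp) (by simp)
    · exact hπC j hj ▸ hgood j
  have hcons : ∀ j ∈ C, rp j (redRatio R (insert i C)) (redRatio R C) := fun j hj => by
    have := hdev.2.2.2 j hj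
    rwa [hdgPref, hπ'.2 j i (Finset.mem_of_mem_erase hj), hπC j hj, hN] at this
  have hnotpref : ¬ rp i (redRatio R (π i)) (redRatio R (insert i C)) := hN ▸ hdev.2.2.1.2
  rw [hN] at hSH
  obtain ⟨hgoodN, hredN, hblueN⟩ := hC.insert hrp hiC hcons hSH
  have hgoodO : GoodCoalition R rp ((π i).erase i) :=
    (hgood i).erase_of_not_pref hrp (hπ.1 i) (redRatio_mem_ratioSet (Finset.insert_nonempty i C))
      hredN hblueN hnotpref
  by_cases haN : a ∈ π' i
  · rwa [hπ'.2 a i haN, hN]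
  by_cases haO : a ∈ π i
  · rwa [hdev.eq_erase_of_mem hπ hπ' haO (by rintro rfl; exact haN (hπ'.1 a))]
  · rw [hdev.eq_of_notMem hπ hπ' haN haO]
    exact hgood a

/-- Along any solitary-homogeneous IS dynamics starting from the singleton
partition in a hedonic diversity game with strict and naturally single-peaked
preferences, every red agent with peak at least `1/2` is always in a coalition
of red ratio at least `1/2`, and every blue agent with peak at most `1/2` is
always in a coalition of red ratio at most `1/2`. -/
theorem hdg_dynamics_peak_half
    (A : Type) [Fintype A] [DecidableEq A]
    (R : Finset A) (rp : A → ℚ → ℚ → Prop)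
    (hwo : ∀ i, WeakOrderOn (rp i) (RatioSet R.card (Fintype.card A)))
    (hstrict : ∀ i, StrictPrefsOn (rp i) (RatioSet R.card (Fintype.card A)))
    (hsp : ∀ i, SinglePeakedOn (rp i) (RatioSet R.card (Fintype.card A)))
    (p : A → ℚ)
    (hpeak : ∀ i, p i ∈ RatioSet R.card (Fintype.card A) ∧
      ∀ x ∈ RatioSet R.card (Fintype.card A), rp i (p i) x)
    (K : ℕ) (seq : ℕ → A → Finset A)
    (h0 : seq 0 = fun a => {a})
    (hstep : ∀ k < K, ISStepSH R rp (seq k) (seq (k + 1))) :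
    ∀ k ≤ K,
      (∀ r ∈ R, (1 : ℚ) / 2 ≤ p r → (1 : ℚ) / 2 ≤ redRatio R (seq k r)) ∧
      (∀ b : A, b ∉ R → p b ≤ (1 : ℚ) / 2 → redRatio R (seq k b) ≤ (1 : ℚ) / 2) := by
  have hrp i : IsStrictSinglePeakedOn (rp i) _ := ⟨hwo i, hstrict i, hsp i⟩
  have hpart : ∀ k ≤ K, IsPartition (seq k) := by
    rintro (_ | k) hk
    · exact h0 ▸ isPartition_singleton
    · exact (hstep k (by omega)).2.1
  have hgood : ∀ k ≤ K, ∀ a, GoodCoalition R rp (seq k a) := by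
    intro k
    induction k with
    | zero => exact fun _ a => h0 ▸ .of_card_le_two (by simp) (by simp)
    | succ k ih => exact fun hk => (hstep k (by omega)).goodCoalition hrp (ih (by omega))
  intro k hk
  refine ⟨fun r hr hpr => ?_, fun b hb hpb => ?_⟩
  · exact (hgood k hk r).half_le_redRatio_of_half_le_peak (hrp r) (hpeak r) hpr
      (Finset.mem_inter.2 ⟨hr, (hpart k hk).1 r⟩)
  · exact (hgood k hk b).redRatio_le_half_of_peak_le_half (hrp b) (hpeak b) hpb
      (Finset.mem_sdiff.2 ⟨(hpart k hk).1 b, hb⟩)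
end

section
/- In every simple symmetric fractional hedonic game on n agents, every sequence of IS deviations starting from the singleton partition has length at most n(n−1)/2; in particular the dynamics of IS deviations starting from the singleton partition converges to an individually stable partition in O(n^2) steps. -/
/-- The utility of agent `i` for the coalition `C` in a fractional hedonic game
with utility functions `v`: the average value of the members of `C`. -/
def fhgUtil {A : Type*} [DecidableEq A] (v : A → A → ℚ) (i : A) (C : Finset A) : ℚ :=
  (∑ j ∈ C, v i j) / (C.card : ℚ)

/-- Coalition preferences of a fractional hedonic game. -/
def fhgPref {A : Type*} [DecidableEq A] (v : A → A → ℚ) :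
    A → Finset A → Finset A → Prop :=
  fun i C D => fhgUtil v i D ≤ fhgUtil v i C

section Aux
variable {A : Type} [DecidableEq A]

/-- All coalitions of `π` are cliques. -/
def CliqueInv (v : A → A → ℚ) (π : A → Finset A) : Prop :=
  ∀ a, ∀ x ∈ π a, ∀ y ∈ π a, x ≠ y → v x y = 1

lemma sum_clique (v : A → A → ℚ) (hdiag : ∀ i, v i i = 0)
    (S : Finset A) (j : A) (hj : j ∈ S)
    (hcl : ∀ x ∈ S, ∀ y ∈ S, x ≠ y → v x y = 1) :
    ∑ k ∈ S, v j k = (S.card : ℚ) - 1 := by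
  rw [← Finset.add_sum_erase S _ hj, hdiag]
  rw [Finset.sum_congr rfl
    (fun k hk => hcl j hj k (Finset.mem_of_mem_erase hk) (Finset.ne_of_mem_erase hk).symm)]
  have h1 : 1 ≤ S.card := Finset.card_pos.mpr ⟨j, hj⟩
  simp [Finset.card_erase_of_mem hj, Nat.cast_sub h1]

lemma util_nonneg (v : A → A → ℚ) (hsimple : ∀ i j, v i j = 0 ∨ v i j = 1)
    (i : A) (C : Finset A) : 0 ≤ fhgUtil v i C := by
  apply div_nonneg _ (by positivity)
  exact Finset.sum_nonneg fun j _ => by rcases hsimple i j with h | h <;> simp [h]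

lemma util_clique (v : A → A → ℚ) (hdiag : ∀ i, v i i = 0)
    (S : Finset A) (j : A) (hj : j ∈ S)
    (hcl : ∀ x ∈ S, ∀ y ∈ S, x ≠ y → v x y = 1) :
    fhgUtil v j S = ((S.card : ℚ) - 1) / (S.card : ℚ) := by
  rw [fhgUtil, sum_clique v hdiag S j hj hcl]

lemma step_lemma [Fintype A] (v : A → A → ℚ)
    (hsimple : ∀ i j, v i j = 0 ∨ v i j = 1)
    (hdiag : ∀ i, v i i = 0)
    (hsym : ∀ i j, v i j = v j i)
    (π π' : A → Finset A)
    (hπ : IsPartition π) (hπ' : IsPartition π')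
    (i : A) (hdev : IsISDeviation (fhgPref v) π π' i)
    (hcl : CliqueInv v π) :
    CliqueInv v π' ∧ (∑ a, ((π a).card : ℤ)) + 2 ≤ ∑ a, ((π' a).card : ℤ) := by
  obtain ⟨hne, hoth, hsp, hwp⟩ := hdev
  set C := π i with hC
  set D := (π' i).erase i with hD
  have hiC : i ∈ C := hπ.1 i
  have hiπ' : i ∈ π' i := hπ'.1 i
  have hiD : i ∉ D := Finset.notMem_erase i _
  have hπ'i : π' i = insert i D := (Finset.insert_erase hiπ').symm
  have hc1 : 1 ≤ C.card := Finset.card_pos.mpr ⟨i, hiC⟩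
  -- coalitions of members of D are exactly D
  have hDj : ∀ j ∈ D, π j = D := by
    intro j hj
    have hji : j ≠ i := Finset.ne_of_mem_erase hj
    have h1 : (π j).erase i = D := by
      rw [← hoth j hji, hD, hπ'.2 j i (Finset.mem_of_mem_erase hj)]
    by_cases hij : i ∈ π j
    · exfalso
      have h2 : π i = π j := hπ.2 i j hij
      exact hne (by rw [hπ'i, ← h1, Finset.insert_erase hij, ← h2])
    · rw [← h1, Finset.erase_eq_of_notMem hij]
  have hDj' : ∀ j ∈ D, π' j = insert i D := fun j hj => by
    rw [hπ'.2 j i (Finset.mem_of_mem_erase hj), hπ'i]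
  -- strict preference of i
  have hlt : fhgUtil v i C < fhgUtil v i (π' i) := lt_of_not_ge hsp.2
  -- D is nonempty
  have hDne : D.Nonempty := by
    by_contra h
    rw [Finset.not_nonempty_iff_eq_empty] at h
    have h2 : fhgUtil v i (π' i) = 0 := by
      rw [hπ'i, h]; simp [fhgUtil, hdiag]
    exact absurd (h2 ▸ hlt) (not_lt.mpr (util_nonneg v hsimple i C))
  have hd1 : 1 ≤ D.card := Finset.card_pos.mpr hDne
  have hclD : ∀ j ∈ D, ∀ x ∈ D, ∀ y ∈ D, x ≠ y → v x y = 1 := by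
    intro j hj x hx y hy hxy
    exact hcl j x (by rw [hDj j hj]; exact hx) y (by rw [hDj j hj]; exact hy) hxy
  have hcardI : (insert i D).card = D.card + 1 := Finset.card_insert_of_notMem hiD
  -- i values every member of D
  have hvD : ∀ j ∈ D, v i j = 1 := by
    intro j hj
    rcases hsimple j i with h0 | h1
    · exfalso
      have hwpj := hwp j hj
      unfold fhgPref at hwpj
      rw [hDj j hj, hDj' j hj, util_clique v hdiag D j hj (hclD j hj)] at hwpj
      have hsI : fhgUtil v j (insert i D) = ((D.card : ℚ) - 1) / ((D.card : ℚ) + 1) := by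
        rw [fhgUtil, Finset.sum_insert hiD, sum_clique v hdiag D j hj (hclD j hj), h0,
          hcardI]
        push_cast; ring_nf
      rw [hsI] at hwpj
      have hdq : (1:ℚ) ≤ (D.card : ℚ) := by exact_mod_cast hd1
      have hdle : (D.card : ℚ) ≤ 1 := by
        rw [div_le_div_iff₀ (by linarith) (by linarith)] at hwpj
        nlinarith
      have hDone : D.card = 1 := le_antisymm (by exact_mod_cast hdle) hd1
      have hDj2 : D = {j} := by
        obtain ⟨a, ha⟩ := Finset.card_eq_one.mp hDone
        rw [ha] at hj ⊢
        simp at hj; rw [hj]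
      have hij : v i j = 0 := by rw [hsym]; exact h0
      have h2 : fhgUtil v i (π' i) = 0 := by
        rw [hπ'i, hDj2, fhgUtil, Finset.sum_insert (by simp [hiD, hDj2] at *; tauto),
          Finset.sum_singleton, hdiag, hij]
        simp
      exact absurd (h2 ▸ hlt) (not_lt.mpr (util_nonneg v hsimple i C))
    · rw [hsym]; exact h1
  -- utility of i in the new coalition
  have hutil' : fhgUtil v i (π' i) = (D.card : ℚ) / ((D.card : ℚ) + 1) := by
    rw [hπ'i, fhgUtil, Finset.sum_insert hiD, hdiag,
      Finset.sum_congr rfl (fun k hk => hvD k hk), Finset.sum_const, hcardI]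
    push_cast; simp
  have hutilC : fhgUtil v i C = ((C.card : ℚ) - 1) / (C.card : ℚ) :=
    util_clique v hdiag C i hiC (hcl i)
  -- the new coalition is larger: C.card ≤ D.card
  have hcd : C.card ≤ D.card := by
    rw [hutil', hutilC] at hlt
    have hcq : (1:ℚ) ≤ (C.card : ℚ) := by exact_mod_cast hc1
    have h2 : (C.card : ℚ) < (D.card : ℚ) + 1 := by
      rw [div_lt_div_iff₀ (by linarith) (by linarith)] at hlt
      nlinarith
    have h3 : C.card < D.card + 1 := by exact_mod_cast h2
    omega
  constructor
  · -- π' is still made of cliques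
    intro a x hx y hy hxy
    by_cases hia : i ∈ π' a
    · have ha : π' a = insert i D := by rw [← hπ'.2 i a hia, hπ'i]
      rw [ha] at hx hy
      rcases Finset.mem_insert.mp hx with rfl | hx'
      · rcases Finset.mem_insert.mp hy with rfl | hy'
        · exact absurd rfl hxy
        · exact hvD y hy'
      · rcases Finset.mem_insert.mp hy with rfl | hy'
        · rw [hsym]; exact hvD x hx'
        · exact hclD x hx' x hx' y hy' hxy
    · have haiI : a ≠ i := fun h => hia (h ▸ hiπ')
      have ha : π' a = (π a).erase i := by
        rw [← hoth a haiI, Finset.erase_eq_of_notMem hia]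
      rw [ha] at hx hy
      exact hcl a x (Finset.mem_of_mem_erase hx) y (Finset.mem_of_mem_erase hy) hxy
  · -- potential increases by at least 2
    set f : A → ℤ := fun a => ((π' a).card : ℤ) - ((π a).card : ℤ) with hf
    have hsub : ∑ a, f a = (∑ a, ((π' a).card : ℤ)) - ∑ a, ((π a).card : ℤ) := by
      rw [hf, Finset.sum_sub_distrib]
    have hdisj : Disjoint D C := by
      rw [Finset.disjoint_left]
      intro a haD haC
      have h1 : π a = D := hDj a haD
      have h2 : π a = C := by rw [hπ.2 a i haC]
      exact hiD (h1 ▸ h2 ▸ hiC)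
    have hzero : ∀ a ∈ (Finset.univ : Finset A), a ∉ D ∪ C → f a = 0 := by
      intro a _ ha
      rw [Finset.mem_union] at ha
      push_neg at ha
      have hai : a ≠ i := fun h => ha.2 (h ▸ hiC)
      have hiπa : i ∉ π a := fun h => ha.2 (by rw [hC, hπ.2 i a h]; exact hπ.1 a)
      have hiπ'a : i ∉ π' a := by
        intro h
        have : π' a = insert i D := by rw [← hπ'.2 i a h, hπ'i]
        have h2 : (π a).erase i = D := by
          rw [← hoth a hai, this, Finset.erase_insert hiD]
        exact ha.1 (h2 ▸ Finset.mem_erase.mpr ⟨hai, hπ.1 a⟩)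
      have : π' a = π a := by
        rw [← Finset.erase_eq_of_notMem hiπ'a, hoth a hai, Finset.erase_eq_of_notMem hiπa]
      simp [hf, this]
    have hsumDC : ∑ a, f a = ∑ a ∈ D ∪ C, f a :=
      (Finset.sum_subset (Finset.subset_univ _) hzero).symm
    have hsumD : ∑ a ∈ D, f a = (D.card : ℤ) := by
      rw [Finset.sum_congr rfl (g := fun _ => (1:ℤ)) ?_, Finset.sum_const, nsmul_eq_mul,
        mul_one]
      intro a ha
      have h1 : π a = D := hDj a ha
      have h2 : π' a = insert i D := hDj' a ha
      simp [hf, h1, h2, hcardI]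
    have hfi : f i = ((D.card : ℤ) + 1) - (C.card : ℤ) := by
      simp [hf, hπ'i, hcardI]
      rfl
    have hsumCe : ∑ a ∈ C.erase i, f a = -(((C.card : ℤ)) - 1) := by
      rw [Finset.sum_congr rfl (g := fun _ => (-1:ℤ)) ?_, Finset.sum_const, nsmul_eq_mul,
        Finset.card_erase_of_mem hiC]
      · push_cast [Nat.cast_sub hc1]; ring
      · intro a ha
        have hai : a ≠ i := Finset.ne_of_mem_erase ha
        have haC : a ∈ C := Finset.mem_of_mem_erase ha
        have h1 : π a = C := hπ.2 a i haC
        have hiπ'a : i ∉ π' a := by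
          intro h
          have h3 : π' a = insert i D := by rw [← hπ'.2 i a h, hπ'i]
          have h4 : (π a).erase i = D := by
            rw [← hoth a hai, h3, Finset.erase_insert hiD]
          have h5 : a ∈ D := h4 ▸ Finset.mem_erase.mpr ⟨hai, hπ.1 a⟩
          exact (Finset.disjoint_left.mp hdisj h5) haC
        have h2 : π' a = C.erase i := by
          rw [← Finset.erase_eq_of_notMem hiπ'a, hoth a hai, h1]
        simp [hf, h1, h2, Finset.card_erase_of_mem hiC]
        push_cast [Nat.cast_sub hc1]; ring
    have hsumC : ∑ a ∈ C, f a = ((D.card : ℤ) + 1) - (C.card : ℤ) - ((C.card : ℤ) - 1) := by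
      rw [← Finset.add_sum_erase C f hiC, hfi, hsumCe]; ring
    have htot : ∑ a, f a = 2 * ((D.card : ℤ) - (C.card : ℤ) + 1) := by
      rw [hsumDC, Finset.sum_union hdisj, hsumD, hsumC]; ring
    have hcdZ : (C.card : ℤ) ≤ (D.card : ℤ) := by exact_mod_cast hcd
    have : (2 : ℤ) ≤ ∑ a, f a := by rw [htot]; linarith
    linarith [hsub ▸ this]


end Aux

/-- In every simple symmetric fractional hedonic game on `n` agents, every
sequence of IS deviations starting from the singleton partition has length at
most `n * (n - 1) / 2`. -/
theorem simple_sym_fhg_converges_from_singletons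
    (A : Type) [Fintype A] [DecidableEq A]
    (v : A → A → ℚ)
    (hsimple : ∀ i j, v i j = 0 ∨ v i j = 1)
    (hdiag : ∀ i, v i i = 0)
    (hsym : ∀ i j, v i j = v j i)
    (m : ℕ) (seq : ℕ → A → Finset A)
    (h0 : seq 0 = fun a => {a})
    (hstep : ∀ k < m, ISStep (fhgPref v) (seq k) (seq (k + 1))) :
    m ≤ Fintype.card A * (Fintype.card A - 1) / 2 := by
  rcases Nat.eq_zero_or_pos m with rfl | hm
  · exact Nat.zero_le _
  have key : ∀ k, k ≤ m → CliqueInv v (seq k) ∧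
      (Fintype.card A : ℤ) + 2 * k ≤ ∑ a, ((seq k a).card : ℤ) := by
    intro k
    induction k with
    | zero =>
      intro _
      constructor
      · intro a x hx y hy hxy
        rw [h0] at hx hy
        simp only [Finset.mem_singleton] at hx hy
        exact absurd (hx.trans hy.symm) hxy
      · rw [h0]; simp
    | succ k ih =>
      intro hk
      have hk' : k < m := hk
      obtain ⟨hπ, hπ', i, hdev⟩ := hstep k hk'
      obtain ⟨hcl', hpot⟩ := step_lemma v hsimple hdiag hsym (seq k) (seq (k + 1))
        hπ hπ' i hdev (ih (le_of_lt hk')).1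
      refine ⟨hcl', ?_⟩
      have h2 := (ih (le_of_lt hk')).2
      push_cast
      push_cast at h2
      linarith
  have h2 := (key m le_rfl).2
  have hbound : ∑ a, ((seq m a).card : ℤ) ≤ (Fintype.card A : ℤ) * (Fintype.card A : ℤ) := by
    calc ∑ a, ((seq m a).card : ℤ) ≤ ∑ _a : A, (Fintype.card A : ℤ) :=
        Finset.sum_le_sum fun a _ => by exact_mod_cast Finset.card_le_univ (seq m a)
      _ = (Fintype.card A : ℤ) * (Fintype.card A : ℤ) := by
        rw [Finset.sum_const, Finset.card_univ, nsmul_eq_mul]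
  obtain ⟨_, _, i, _⟩ := hstep 0 hm
  have hn : 1 ≤ Fintype.card A := Fintype.card_pos_iff.mpr ⟨i⟩
  have hfin : 2 * m ≤ Fintype.card A * (Fintype.card A - 1) := by
    have hz : (2 * m : ℤ) ≤ (Fintype.card A : ℤ) * ((Fintype.card A : ℤ) - 1) := by
      nlinarith [h2, hbound]
    have hcast : ((Fintype.card A * (Fintype.card A - 1) : ℕ) : ℤ)
        = (Fintype.card A : ℤ) * ((Fintype.card A : ℤ) - 1) := by
      rw [Nat.cast_mul, Nat.cast_sub hn]; push_cast; ring
    exact_mod_cast hcast ▸ hz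
  omega
end
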